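/- arXiv:math/0203065 — 7 statements merged into one kernel-verified Lean document; each statement's English description precedes it below -/
import Mathlib

section
/- Let K be a metric continuum, let x ∈ K, and let 𝒞 be a countable family of nonempty closed subsets of K. Then there is a map φ from the closed subsets of K to the closed subsets of the half line H = [0,∞) such that: (1) φ(∅) = ∅ and φ(K) = H; (2) φ(F ∪ G) = φ(F) ∪ φ(G) for all closed F, G ⊆ K; (3) for every finite family F₁,…,Fₙ of closed subsets of K with F₁ ∩ ⋯ ∩ Fₙ = ∅, the set φ(F₁) ∩ ⋯ ∩ φ(Fₙ) is compact; (4) ℕ ⊆ φ({x}) (where ℕ is regarded as a subset of [0,∞)); and moreover for every F ∈ 𝒞 the set φ(F) is not compact. -/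
/-
Chain-connectedness of `K` gives, for every `n`, a `1/(n+1)`-chain from `x` out to the `n`-th term
of a sequence that visits every member of `𝒞` infinitely often, and back to `x`. Laying these
loops end to end gives a sequence `p` in `K` whose steps tend to `0`; running through the `n`-th
loop during `[n, n+1]` gives times `t`. A closed set `F` is sent to the union of the intervals
`[t k, t (k+1)]` whose edge `(p k, p (k+1))` meets `F`. This preserves finite unions, the image of
`{x}` contains every `n : ℕ` because `p` is at `x` at time `n`, and the image of a member of `𝒞`
is unbounded. If closed sets `F i` have empty intersection, a Lebesgue number `δ` of the cover by
their complements leaves no point within `δ` of all of them, whereas far out a point of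
`⋂ i, φ (F i)` lies in at most two consecutive intervals, so edges shorter than `δ / 3` would
produce such a point.
-/

open Set Topology Function

noncomputable section

/-- The half line `H = [0,∞)` as a topological space. -/
abbrev HalfLine : Type := ↥(Set.Ici (0 : ℝ))

/-- The copy of `ℕ` inside the half line `[0,∞)`. -/
def NatInHalfLine : Set HalfLine := {h : HalfLine | ∃ n : ℕ, (h : ℝ) = n}

open Filter

theorem Set.Countable.exists_seq_frequently_mem {α : Type*} [Nonempty α] {𝒞 : Set (Set α)}
    (h𝒞 : 𝒞.Countable) (hne : ∀ F ∈ 𝒞, F.Nonempty) :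
    ∃ z : ℕ → α, ∀ F ∈ 𝒞, ∃ᶠ n in atTop, z n ∈ F := by
  obtain ⟨e, he⟩ := countable_iff_exists_subset_range.1 h𝒞
  refine ⟨fun n => Classical.epsilon (· ∈ e n.unpair.1), fun F hF => frequently_atTop.2 fun N => ?_⟩
  obtain ⟨k, rfl⟩ := he hF
  refine ⟨Nat.pair k N, Nat.right_le_pair k N, ?_⟩
  simpa only [Nat.unpair_pair] using Classical.epsilon_spec (hne _ hF)

theorem Relation.ReflTransGen.exists_seq {α : Type*} {r : α → α → Prop} {a b : α}
    (h : ReflTransGen r a b) :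
    ∃ (m : ℕ) (f : ℕ → α), f 0 = a ∧ f m = b ∧ ∀ i < m, r (f i) (f (i + 1)) := by
  induction h with
  | refl => exact ⟨0, fun _ => a, rfl, rfl, fun i hi => absurd hi (Nat.not_lt_zero i)⟩
  | @tail b c _ hbc ih =>
    obtain ⟨m, f, hf0, hfm, hf⟩ := ih
    refine ⟨m + 1, fun i => if i ≤ m then f i else c, by simp [hf0], by simp, fun i hi => ?_⟩
    rcases Nat.lt_succ_iff_lt_or_eq.1 hi with hi | rfl
    · simpa [hi.le, Nat.succ_le_of_lt hi] using hf i hi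
    · simpa [hfm] using hbc

section Chains

variable {K : Type*} [PseudoMetricSpace K]

theorem reflTransGen_dist_lt [PreconnectedSpace K] {ε : ℝ} (hε : 0 < ε) (x y : K) :
    Relation.ReflTransGen (fun a b => dist a b < ε) x y := by
  refine PreconnectedSpace.induction₂' _ (fun x => ?_) ⟨fun _ _ _ => .trans⟩ x y
  filter_upwards [Metric.ball_mem_nhds x hε] with y hy
  exact ⟨.single (Metric.mem_ball'.1 hy), .single hy⟩

theorem exists_loop_dist_lt [PreconnectedSpace K] {ε : ℝ} (hε : 0 < ε) (x z : K) :
    ∃ (m : ℕ) (ℓ : ℕ → K), ℓ 0 = x ∧ ℓ (2 * m + 1) = x ∧ ℓ m = z ∧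
      ∀ j < 2 * m + 1, dist (ℓ j) (ℓ (j + 1)) < ε := by
  obtain ⟨m, f, hf0, hfm, hf⟩ := (reflTransGen_dist_lt hε x z).exists_seq
  -- out along `f`, one idle step at `z` (so that `z` sits at an index `< 2 * m + 1` even if
  -- `m = 0`), and back
  refine ⟨m, fun j => f (min j (2 * m + 1 - j)), by simpa using hf0, by simpa using hf0,
    by simpa [show min m (2 * m + 1 - m) = m by omega] using hfm, fun j hj => ?_⟩
  show dist (f (min j (2 * m + 1 - j))) (f (min (j + 1) (2 * m + 1 - (j + 1)))) < ε
  rcases lt_trichotomy j m with h | rfl | h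
  · rw [show min j (2 * m + 1 - j) = j by omega, show min (j + 1) (2 * m + 1 - (j + 1)) = j + 1
      by omega]
    exact hf j h
  · rw [show min j (2 * j + 1 - j) = j by omega, show min (j + 1) (2 * j + 1 - (j + 1)) = j
      by omega, dist_self]
    exact hε
  · rw [show min j (2 * m + 1 - j) = 2 * m - j + 1 by omega,
      show min (j + 1) (2 * m + 1 - (j + 1)) = 2 * m - j by omega, dist_comm]
    exact hf (2 * m - j) (by omega)

theorem dist_le_of_forall_dist_succ_le {p : ℕ → K} {N a b d : ℕ} {η : ℝ}
    (hη : ∀ k ≥ N, dist (p k) (p (k + 1)) ≤ η) (ha : N ≤ a) (hab : a ≤ b) (hbd : b ≤ a + d) :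
    dist (p a) (p b) ≤ d * η := by
  have hη₀ : 0 ≤ η := dist_nonneg.trans (hη N le_rfl)
  calc dist (p a) (p b) ≤ ∑ _i ∈ Finset.Ico a b, η :=
        dist_le_Ico_sum_of_dist_le hab fun hk _ => hη _ (ha.trans hk)
    _ = (b - a : ℕ) * η := by simp
    _ ≤ d * η := by gcongr; omega

end Chains

section Concat

def concatStep (L : ℕ → ℕ) (s : ℕ × ℕ) : ℕ × ℕ :=
  if s.2 + 1 < L s.1 then (s.1, s.2 + 1) else (s.1 + 1, 0)

/-- `concatPos L k = (n, j)` when the `k`-th entry of the concatenation of blocks of lengths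
`L 0, L 1, …` is entry `j` of block `n`. -/
def concatPos (L : ℕ → ℕ) (k : ℕ) : ℕ × ℕ :=
  (concatStep L)^[k] (0, 0)

def concatSeq {α : Type*} (L : ℕ → ℕ) (f : ℕ → ℕ → α) (k : ℕ) : α :=
  f (concatPos L k).1 (concatPos L k).2

variable {L : ℕ → ℕ}

theorem concatPos_succ (k : ℕ) : concatPos L (k + 1) = concatStep L (concatPos L k) :=
  iterate_succ_apply' _ _ _

theorem concatPos_snd_lt (hL : ∀ n, 0 < L n) (k : ℕ) :
    (concatPos L k).2 < L (concatPos L k).1 := by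
  induction k with
  | zero => exact hL 0
  | succ k ih =>
    rw [concatPos_succ, concatStep]
    split_ifs with h
    · exact h
    · exact hL _

theorem concatPos_fst_le (k : ℕ) : (concatPos L k).1 ≤ k := by
  induction k with
  | zero => exact le_rfl
  | succ k ih =>
    rw [concatPos_succ, concatStep]
    split_ifs <;> dsimp only <;> omega

theorem monotone_concatPos_fst : Monotone fun k => (concatPos L k).1 :=
  monotone_nat_of_le_succ fun k => by
    rw [concatPos_succ, concatStep]
    split_ifs <;> dsimp only <;> omega

theorem concatPos_add {k n i d : ℕ} (h : concatPos L k = (n, i)) (hd : i + d < L n) :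
    concatPos L (k + d) = (n, i + d) := by
  induction d with
  | zero => exact h
  | succ d ih =>
    rw [← add_assoc, concatPos_succ, ih (by omega), concatStep]
    dsimp only
    exact if_pos (by omega)

theorem exists_concatPos_eq (hL : ∀ n, 0 < L n) {n j : ℕ} (hj : j < L n) :
    ∃ k, concatPos L k = (n, j) := by
  suffices h : ∀ n, ∃ k, concatPos L k = (n, 0) by
    obtain ⟨k, hk⟩ := h n
    exact ⟨k + j, by simpa using concatPos_add hk (by omega)⟩
  intro n
  induction n with
  | zero => exact ⟨0, rfl⟩
  | succ n ih =>
    obtain ⟨k, hk⟩ := ih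
    have hlast := concatPos_add hk (d := L n - 1) (by have := hL n; omega)
    refine ⟨k + (L n - 1) + 1, ?_⟩
    rw [concatPos_succ, hlast, concatStep]
    dsimp only
    exact if_neg (by have := hL n; omega)

theorem tendsto_concatPos_fst (hL : ∀ n, 0 < L n) :
    Tendsto (fun k => (concatPos L k).1) atTop atTop :=
  tendsto_atTop_atTop_of_monotone monotone_concatPos_fst fun n =>
    let ⟨k, hk⟩ := exists_concatPos_eq hL (hL n)
    ⟨k, by rw [hk]⟩

theorem concatSeq_succ {α : Type*} {f : ℕ → ℕ → α} (hL : ∀ n, 0 < L n)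
    (hjoin : ∀ n, f n (L n) = f (n + 1) 0) (k : ℕ) :
    concatSeq L f (k + 1) = f (concatPos L k).1 ((concatPos L k).2 + 1) := by
  have := concatPos_snd_lt hL k
  simp only [concatSeq, concatPos_succ, concatStep]
  split_ifs
  · rfl
  · rw [show (concatPos L k).2 + 1 = L (concatPos L k).1 by omega, hjoin]

end Concat

section ChainImage

variable {K : Type*} (p : ℕ → K) (t : ℕ → ℝ)

def chainImage (F : Set K) : Set ℝ :=
  ⋃ (k) (_ : p k ∈ F ∨ p (k + 1) ∈ F), Icc (t k) (t (k + 1))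

variable {p t}

theorem mem_chainImage {F : Set K} {r : ℝ} :
    r ∈ chainImage p t F ↔ ∃ k, (p k ∈ F ∨ p (k + 1) ∈ F) ∧ r ∈ Icc (t k) (t (k + 1)) := by
  simp only [chainImage, mem_iUnion, exists_prop]

theorem chainImage_empty : chainImage p t ∅ = ∅ := by
  simp [chainImage]

theorem chainImage_union (F G : Set K) :
    chainImage p t (F ∪ G) = chainImage p t F ∪ chainImage p t G := by
  ext r
  simp only [mem_union, mem_chainImage]
  grind

theorem apply_mem_chainImage (ht : Monotone t) {F : Set K} {k : ℕ} (hk : p k ∈ F) :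
    t k ∈ chainImage p t F :=
  mem_chainImage.2 ⟨k, .inl hk, left_mem_Icc.2 (ht k.le_succ)⟩

theorem chainImage_univ (ht : Monotone t) (htop : Tendsto t atTop atTop) :
    chainImage p t univ = Ici (t 0) := by
  refine Subset.antisymm (iUnion₂_subset fun k _ s hs => (ht k.zero_le).trans hs.1) fun r hr => ?_
  rw [← Nat.bot_eq_zero, ← iUnion_Ico_map_succ_eq_Ici (fun k => ht bot_le)
    (not_bddAbove_of_tendsto_atTop htop)] at hr
  obtain ⟨k, hk⟩ := mem_iUnion.1 hr
  exact mem_chainImage.2 ⟨k, .inl trivial, Ico_subset_Icc_self (by simpa using hk)⟩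

theorem isClosed_chainImage (htop : Tendsto t atTop atTop) (F : Set K) :
    IsClosed (chainImage p t F) := by
  have hlf : LocallyFinite fun k => Icc (t k) (t (k + 1)) := fun r => by
    refine ⟨Iio (r + 1), Iio_mem_nhds (lt_add_one r), ?_⟩
    have : {k | t k < r + 1}.Finite := by
      simpa [← Nat.cofinite_eq_atTop] using htop.eventually_ge_atTop (r + 1)
    exact this.subset fun k ⟨s, hs, hsr⟩ => hs.1.trans_lt hsr
  exact (hlf.subset fun k => iUnion_subset fun _ => subset_rfl).isClosed_iUnion fun k =>
    isClosed_iUnion_of_finite fun _ => isClosed_Icc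

theorem not_bddAbove_chainImage (ht : Monotone t) (htop : Tendsto t atTop atTop) {F : Set K}
    (hF : ∃ᶠ k in atTop, p k ∈ F) : ¬ BddAbove (chainImage p t F) := by
  rintro ⟨C, hC⟩
  obtain ⟨k, hk, hkC⟩ := (hF.and_eventually (htop.eventually_gt_atTop C)).exists
  exact (hC (apply_mem_chainImage ht hk)).not_gt hkC

theorem le_add_one_of_mem_Icc (ht : StrictMono t) {r : ℝ} {k k' : ℕ}
    (hk : r ∈ Icc (t k) (t (k + 1))) (hk' : r ∈ Icc (t k') (t (k' + 1))) : k' ≤ k + 1 := by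
  by_contra! h
  exact (ht h).not_ge (hk'.1.trans hk.2)

theorem exists_mem_near_of_mem_chainImage (ht : StrictMono t) {F : Set K} {r : ℝ} {k : ℕ}
    (hr : r ∈ chainImage p t F) (hk : r ∈ Icc (t k) (t (k + 1))) :
    ∃ j, k ≤ j + 1 ∧ j ≤ k + 2 ∧ p j ∈ F := by
  obtain ⟨k', hF, hk'⟩ := mem_chainImage.1 hr
  have h₁ := le_add_one_of_mem_Icc ht hk hk'
  have h₂ := le_add_one_of_mem_Icc ht hk' hk
  rcases hF with hF | hF
  · exact ⟨k', h₂, by omega, hF⟩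
  · exact ⟨k' + 1, by omega, by omega, hF⟩

theorem bddAbove_iInter_chainImage [PseudoMetricSpace K] [CompactSpace K] (ht : StrictMono t)
    (hp : Tendsto (fun k => dist (p k) (p (k + 1))) atTop (𝓝 0)) {ι : Type*} {F : ι → Set K}
    (hF : ∀ i, IsClosed (F i)) (hempty : ⋂ i, F i = ∅) :
    BddAbove (⋂ i, chainImage p t (F i)) := by
  obtain ⟨δ, hδ, hball⟩ := lebesgue_number_lemma_of_metric isCompact_univ
    (fun i => (hF i).isOpen_compl) (by rw [← compl_iInter, hempty, compl_empty])
  obtain ⟨N, hN⟩ := eventually_atTop.1 (hp.eventually (ge_mem_nhds (by positivity : 0 < δ / 3)))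
  refine ⟨t (N + 1), fun r hr => le_of_not_gt fun hNr => ?_⟩
  obtain ⟨i₀, -⟩ := hball (p 0) (mem_univ _)
  obtain ⟨k, -, hk⟩ := mem_chainImage.1 (mem_iInter.1 hr i₀)
  have hNk : N < k := by have := ht.lt_iff_lt.1 (hNr.trans_le hk.2); omega
  obtain ⟨i, hi⟩ := hball (p k) (mem_univ _)
  obtain ⟨j, hkj, hjk, hj⟩ := exists_mem_near_of_mem_chainImage ht (mem_iInter.1 hr i) hk
  have hdist : dist (p j) (p k) ≤ 2 * (δ / 3) := by
    rcases le_total j k with hle | hle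
    · exact_mod_cast dist_le_of_forall_dist_succ_le hN (by omega) hle (by omega : k ≤ j + 2)
    · rw [dist_comm]
      exact_mod_cast dist_le_of_forall_dist_succ_le hN hNk.le hle (by omega : j ≤ k + 2)
  exact hi (Metric.mem_ball.2 (by linarith)) hj

end ChainImage

theorem exists_chain_seq {K : Type*} [PseudoMetricSpace K] [PreconnectedSpace K] (x : K)
    (z : ℕ → K) :
    ∃ (p : ℕ → K) (t : ℕ → ℝ), StrictMono t ∧ t 0 = 0 ∧ Tendsto t atTop atTop ∧
      Tendsto (fun k => dist (p k) (p (k + 1))) atTop (𝓝 0) ∧ (∀ n : ℕ, ∃ k, t k = n ∧ p k = x) ∧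
      ∀ F : Set K, (∃ᶠ n in atTop, z n ∈ F) → ∃ᶠ k in atTop, p k ∈ F := by
  choose m ℓ hℓ0 hℓL hℓm hℓ using fun n : ℕ =>
    exists_loop_dist_lt (Nat.one_div_pos_of_nat (n := n)) x (z n)
  set L : ℕ → ℕ := fun n => 2 * m n + 1
  have hL : ∀ n, 0 < L n := fun n => Nat.succ_pos _
  set τ : ℕ → ℕ → ℝ := fun n j => n + j / L n
  have hτ : ∀ n, τ n (L n) = τ (n + 1) 0 := fun n => by simp [τ]
  have hℓjoin : ∀ n, ℓ n (L n) = ℓ (n + 1) 0 := fun n => by simp [L, hℓL, hℓ0]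
  have hfst := tendsto_concatPos_fst hL
  refine ⟨concatSeq L ℓ, concatSeq L τ, strictMono_nat_of_lt_succ fun k => ?_,
    by simp [concatSeq, concatPos, τ],
    tendsto_atTop_mono (fun k => le_add_of_nonneg_right (by positivity))
      (tendsto_natCast_atTop_atTop.comp hfst), ?_, fun n => ?_, fun F hF => ?_⟩
  · rw [concatSeq_succ hL hτ]
    simp only [concatSeq, τ]
    gcongr
    simp
  · refine squeeze_zero (fun _ => dist_nonneg) (fun k => ?_)
      (tendsto_one_div_add_atTop_nhds_zero_nat.comp hfst)
    rw [concatSeq_succ hL hℓjoin]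
    exact (hℓ _ _ (concatPos_snd_lt hL k)).le
  · obtain ⟨k, hk⟩ := exists_concatPos_eq hL (hL n)
    exact ⟨k, by simp [concatSeq, hk, τ], by simp [concatSeq, hk, hℓ0]⟩
  · rw [frequently_atTop] at hF ⊢
    intro N
    obtain ⟨n, hn, hzn⟩ := hF N
    obtain ⟨k, hk⟩ := exists_concatPos_eq hL (show m n < L n by simp only [L]; omega)
    exact ⟨k, hn.trans (by simpa [hk] using concatPos_fst_le (L := L) k),
      by simpa [concatSeq, hk, hℓm] using hzn⟩

theorem isCompact_preimage_val_of_bddAbove {S : Set ℝ} (hS : IsClosed S) (hbdd : BddAbove S) :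
    IsCompact (Subtype.val ⁻¹' S : Set HalfLine) := by
  obtain ⟨C, hC⟩ := hbdd
  have : (Subtype.val ⁻¹' S : Set HalfLine) = Subtype.val ⁻¹' (S ∩ Icc 0 C) := by
    ext ⟨r, hr⟩
    exact ⟨fun h => ⟨h, hr, hC h⟩, fun h => h.1⟩
  rw [this]
  exact isClosed_Ici.isClosedEmbedding_subtypeVal.isCompact_preimage (isCompact_Icc.inter_left hS)

theorem not_isCompact_preimage_val_of_not_bddAbove {S : Set ℝ} (hS : ¬ BddAbove S) :
    ¬ IsCompact (Subtype.val ⁻¹' S : Set HalfLine) := fun hc => by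
  obtain ⟨C, hC⟩ := (hc.image continuous_subtype_val).bddAbove
  obtain ⟨s, hs, hCs⟩ := not_bddAbove_iff.1 hS (max C 0)
  exact (hC ⟨⟨s, (le_max_right C 0).trans hCs.le⟩, hs, rfl⟩).not_gt ((le_max_left C 0).trans_lt hCs)

theorem exists_almost_lattice_embedding_into_halfline_general
    (K : Type*) [MetricSpace K] [CompactSpace K] [ConnectedSpace K]
    (x : K) (𝒞 : Set (Set K)) (h𝒞count : 𝒞.Countable)
    (h𝒞 : ∀ F ∈ 𝒞, IsClosed F ∧ F.Nonempty) :
    ∃ φ : Set K → Set HalfLine,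
      (∀ F : Set K, IsClosed F → IsClosed (φ F)) ∧
      φ ∅ = ∅ ∧
      φ Set.univ = Set.univ ∧
      (∀ F G : Set K, IsClosed F → IsClosed G → φ (F ∪ G) = φ F ∪ φ G) ∧
      (∀ (n : ℕ) (F : Fin n → Set K), (∀ i, IsClosed (F i)) →
        (⋂ i, F i) = ∅ → IsCompact (⋂ i, φ (F i))) ∧
      NatInHalfLine ⊆ φ {x} ∧
      (∀ F ∈ 𝒞, ¬ IsCompact (φ F)) := by
  obtain ⟨z, hz⟩ := h𝒞count.exists_seq_frequently_mem fun F hF => (h𝒞 F hF).2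
  obtain ⟨p, t, ht, ht0, htop, hstep, hx, hvisit⟩ := exists_chain_seq x z
  refine ⟨fun F => Subtype.val ⁻¹' chainImage p t F,
    fun F _ => (isClosed_chainImage htop F).preimage continuous_subtype_val,
    by simp [chainImage_empty], by simp [chainImage_univ ht.monotone htop, ht0],
    fun F G _ _ => by simp [chainImage_union], fun n F hF hempty => ?_, ?_,
    fun F hF => not_isCompact_preimage_val_of_not_bddAbove
      (not_bddAbove_chainImage ht.monotone htop (hvisit F (hz F hF)))⟩
  · rw [← preimage_iInter]
    exact isCompact_preimage_val_of_bddAbove (isClosed_iInter fun i => isClosed_chainImage htop _)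
      (bddAbove_iInter_chainImage ht hstep hF hempty)
  · rintro r ⟨n, hn⟩
    obtain ⟨k, hk, hpk⟩ := hx n
    rw [mem_preimage, hn, ← hk]
    exact apply_mem_chainImage ht.monotone hpk

/-- For a metric continuum `K`, a point `x ∈ K` and a countable family `𝒞` of nonempty
closed subsets of `K`, there is a map `φ` from closed subsets of `K` to closed subsets
of `H = [0,∞)` with: `φ ∅ = ∅`, `φ K = H`, `φ` preserves finite unions, finite families
with empty intersection go to families with compact intersection, `ℕ ⊆ φ {x}`, and
`φ F` is noncompact for every `F ∈ 𝒞`. -/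
theorem exists_almost_lattice_embedding_into_halfline
    (K : Type*) [MetricSpace K] [CompactSpace K] [ConnectedSpace K] [Nonempty K]
    (x : K) (𝒞 : Set (Set K)) (h𝒞count : 𝒞.Countable)
    (h𝒞 : ∀ F ∈ 𝒞, IsClosed F ∧ F.Nonempty) :
    ∃ φ : Set K → Set HalfLine,
      (∀ F : Set K, IsClosed F → IsClosed (φ F)) ∧
      φ ∅ = ∅ ∧
      φ Set.univ = Set.univ ∧
      (∀ F G : Set K, IsClosed F → IsClosed G → φ (F ∪ G) = φ F ∪ φ G) ∧
      (∀ (n : ℕ) (F : Fin n → Set K), (∀ i, IsClosed (F i)) →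
        (⋂ i, F i) = ∅ → IsCompact (⋂ i, φ (F i))) ∧
      NatInHalfLine ⊆ φ {x} ∧
      (∀ F ∈ 𝒞, ¬ IsCompact (φ F)) :=
  exists_almost_lattice_embedding_into_halfline_general K x 𝒞 h𝒞count h𝒞
end
end

section
/- (Alexandroff) Every compact Hausdorff space is the continuous image of a compact zero-dimensional space of the same weight: for every infinite cardinal κ and every compact Hausdorff space X admitting a base for its topology of cardinality at most κ, there exist a compact Hausdorff space Y whose clopen subsets form a base for its topology, such that Y admits a base of cardinality at most κ, and a continuous surjection from Y onto X. -/
/-!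
Fix a base `B` of `X` and record each point `x` by a code `s : B → Bool` which says, for every
`U ∈ B`, whether `x ∈ U`, except that on the boundary of `U` either answer is allowed. The pairs
`(x, s)` form a closed, hence compact, subspace `Y` of `X × (B → Bool)`, and `Y → X` is onto.
Since `X` is regular, the code determines the point, so `Y` embeds into the Cantor cube
`B → Bool`: it is therefore totally disconnected, hence zero-dimensional, and its weight is at
most that of the cube, `max ℵ₀ #B`.
-/

open Set Topology Function

universe u

open Cardinal TopologicalSpace

def boolCylinder {ι : Type*} (F : Finset (ι × Bool)) : Set (ι → Bool) :=
  {f | ∀ p ∈ F, f p.1 = p.2}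

theorem isTopologicalBasis_range_boolCylinder (ι : Type*) :
    IsTopologicalBasis (range (boolCylinder (ι := ι))) := by
  classical
  refine isTopologicalBasis_of_isOpen_of_nhds ?_ fun f U hfU hU => ?_
  · rintro _ ⟨F, rfl⟩
    have hF : boolCylinder F = ⋂ p ∈ F, (fun f : ι → Bool => f p.1) ⁻¹' {p.2} := by
      ext; simp [boolCylinder]
    rw [hF]
    exact isOpen_biInter_finset fun p _ => (isOpen_discrete _).preimage (continuous_apply p.1)
  · obtain ⟨I, u, hu, hIU⟩ := isOpen_pi_iff.1 hU f hfU
    refine ⟨_, ⟨I.image fun i => (i, f i), rfl⟩, fun p hp => by grind,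
      fun g hg => hIU fun i hi => ?_⟩
    have hgi : g i = f i := hg (i, f i) (Finset.mem_image_of_mem _ hi)
    exact hgi ▸ (hu i hi).2

theorem Cardinal.mk_finset_le_max (α : Type u) : #(Finset α) ≤ max ℵ₀ #α := by
  classical
  exact (mk_le_of_surjective fun F : Finset α => ⟨F.toList, F.toList_toFinset⟩).trans
    (mk_list_le_max α)

theorem Cardinal.mk_prod_bool_le_max (α : Type u) : #(α × Bool) ≤ max ℵ₀ #α := by
  rw [mk_prod, lift_uzero]
  exact (mul_le_max _ _).trans <|
    max_le (max_le le_sup_right ((lift_le_aleph0.2 mk_le_aleph0).trans le_sup_left)) le_sup_left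

theorem exists_isTopologicalBasis_pi_bool_mk_le (ι : Type u) :
    ∃ C : Set (Set (ι → Bool)), IsTopologicalBasis C ∧ #C ≤ max ℵ₀ #ι := by
  refine ⟨_, isTopologicalBasis_range_boolCylinder ι, mk_range_le.trans ?_⟩
  calc #(Finset (ι × Bool)) ≤ max ℵ₀ #(ι × Bool) := mk_finset_le_max _
    _ ≤ max ℵ₀ #ι := max_le le_sup_left (mk_prod_bool_le_max ι)

section BasisCodes

variable {X : Type u} [TopologicalSpace X]

def basisCodes (B : Set (Set X)) : Set (X × (B → Bool)) :=
  {p | ∀ U : B, (p.2 U = true → p.1 ∈ closure (U : Set X)) ∧ (p.2 U = false → p.1 ∉ (U : Set X))}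

theorem isClosed_basisCodes {B : Set (Set X)} (hB : ∀ U ∈ B, IsOpen U) :
    IsClosed (basisCodes B) := by
  have hcode (U : B) (b : Bool) : IsOpen {p : X × (B → Bool) | p.2 U = b} :=
    (isOpen_discrete {b}).preimage
      ((continuous_apply (A := fun _ : B => Bool) U).comp continuous_snd)
  simp only [basisCodes, ofPred_forall, ofPred_and]
  refine isClosed_iInter fun U => (isClosed_imp (hcode U true) ?_).inter
    (isClosed_imp (hcode U false) ?_)
  · exact isClosed_closure.preimage continuous_fst
  · exact (hB U U.2).isClosed_compl.preimage continuous_fst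

theorem surjective_fst_basisCodes (B : Set (Set X)) :
    Surjective fun p : basisCodes B => p.1.1 := by
  classical
  intro x
  refine ⟨⟨(x, fun U => decide (x ∈ (U : Set X))), fun U => ⟨fun h => ?_, fun h => ?_⟩⟩, rfl⟩
  · exact subset_closure (of_decide_eq_true h)
  · exact of_decide_eq_false h

theorem injective_snd_basisCodes [T3Space X] {B : Set (Set X)} (hB : IsTopologicalBasis B) :
    Injective fun p : basisCodes B => p.1.2 := by
  rintro ⟨⟨x, s⟩, hx⟩ ⟨⟨y, t⟩, hy⟩ (rfl : s = t)
  simp only [Subtype.mk.injEq, Prod.mk.injEq, and_true]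
  by_contra hxy
  obtain ⟨U, hUB, hxU, hUy⟩ :=
    hB.exists_closure_subset (isOpen_compl_singleton.mem_nhds hxy)
  cases hs : s ⟨U, hUB⟩
  · exact (hx ⟨U, hUB⟩).2 hs hxU
  · exact hUy ((hy ⟨U, hUB⟩).1 hs) rfl

end BasisCodes

/-- (Alexandroff) Every compact Hausdorff space of weight at most `κ` is the continuous
image of a compact zero-dimensional (Hausdorff) space of weight at most `κ`. -/
theorem compact_image_of_zero_dimensional_same_weight
    (κ : Cardinal.{u}) (hκ : Cardinal.aleph0 ≤ κ)
    (X : Type u) [TopologicalSpace X] [CompactSpace X] [T2Space X]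
    (hw : ∃ B : Set (Set X), TopologicalSpace.IsTopologicalBasis B ∧ Cardinal.mk B ≤ κ) :
    ∃ (Y : Type u) (tY : TopologicalSpace Y),
      @CompactSpace Y tY ∧ @T2Space Y tY ∧
      @TopologicalSpace.IsTopologicalBasis Y tY {V : Set Y | @IsClopen Y tY V} ∧
      (∃ B : Set (Set Y), @TopologicalSpace.IsTopologicalBasis Y tY B ∧ Cardinal.mk B ≤ κ) ∧
      ∃ f : Y → X, @Continuous Y X tY _ f ∧ Surjective f := by
  obtain ⟨B, hB, hBκ⟩ := hw
  have : CompactSpace (basisCodes B) :=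
    isCompact_iff_compactSpace.1 (isClosed_basisCodes fun _ => hB.isOpen).isCompact
  have hcode : IsEmbedding fun p : basisCodes B => p.1.2 :=
    ((continuous_snd.comp continuous_subtype_val).isClosedEmbedding
      (injective_snd_basisCodes hB)).isEmbedding
  have : TotallyDisconnectedSpace (basisCodes B) :=
    hcode.isTotallyDisconnected_range.1 (isTotallyDisconnected_of_totallyDisconnectedSpace _)
  obtain ⟨C, hC, hCB⟩ := exists_isTopologicalBasis_pi_bool_mk_le B
  exact ⟨basisCodes B, inferInstance, ‹_›, inferInstance, loc_compact_Haus_tot_disc_of_zero_dim,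
    ⟨_, hC.isInducing hcode.isInducing, mk_image_le.trans (hCB.trans (max_le hκ hBκ))⟩,
    _, continuous_fst.comp continuous_subtype_val, surjective_fst_basisCodes B⟩
end

section
/- (Alexandroff–Hausdorff) Every nonempty compact metric space is a continuous image of the Cantor set: for every nonempty compact metric space X there is a continuous surjection from the Cantor space 2^ℕ (the countable product of the two-point discrete space) onto X. -/
open Set Topology Function

/-- (Alexandroff–Hausdorff) Every nonempty compact metric space is a continuous image
of the Cantor space `2^ℕ`. -/
theorem cantor_maps_onto_compact_metric
    (X : Type*) [MetricSpace X] [CompactSpace X] [Nonempty X] :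
    ∃ f : (ℕ → Bool) → X, Continuous f ∧ Surjective f :=
  exists_nat_bool_continuous_surjective_of_compact X
end

section
/- (Krasinkiewicz–Minc) A compact Hausdorff space X is hereditarily indecomposable if and only if for every pair of disjoint nonempty closed subsets C and D of X, X is crooked between C and D. -/
open Set Topology Function

/-- A space is hereditarily indecomposable if whenever two subcontinua
(nonempty closed connected subsets) meet, one contains the other. -/
def HereditarilyIndecomposable (X : Type*) [TopologicalSpace X] : Prop :=
  ∀ A B : Set X, IsClosed A → IsConnected A → IsClosed B → IsConnected B →
    (A ∩ B).Nonempty → A ⊆ B ∨ B ⊆ A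

/-- `X` is crooked between the disjoint closed sets `C` and `D` if for all open
neighbourhoods `U ⊇ C` and `V ⊇ D` one can write `X = X₀ ∪ X₁ ∪ X₂` with each `Xᵢ`
closed, `C ⊆ X₀`, `X₀ ∩ X₁ ⊆ V`, `X₀ ∩ X₂ = ∅`, `X₁ ∩ X₂ ⊆ U` and `D ⊆ X₂`. -/
def CrookedBetween (X : Type*) [TopologicalSpace X] (C D : Set X) : Prop :=
  ∀ U V : Set X, IsOpen U → IsOpen V → C ⊆ U → D ⊆ V →
    ∃ X₀ X₁ X₂ : Set X,
      IsClosed X₀ ∧ IsClosed X₁ ∧ IsClosed X₂ ∧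
      X₀ ∪ X₁ ∪ X₂ = Set.univ ∧
      C ⊆ X₀ ∧ X₀ ∩ X₁ ⊆ V ∧ X₀ ∩ X₂ = ∅ ∧ X₁ ∩ X₂ ⊆ U ∧ D ⊆ X₂


/-!
Crookedness between two points `a ∉ B`, `b ∉ A` of meeting subcontinua `A`, `B`, taken with
`U = Bᶜ` and `V = Aᶜ`, forces `A ⊆ X₀` and `B ⊆ X₂` by connectedness, contradicting
`X₀ ∩ X₂ = ∅`.

Conversely, shrink `U` and `V` to open `U' ⊇ C`, `V' ⊇ D` with closures inside `U ∖ D` and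
`V ∖ C`, and put `E = V'ᶜ`, `F = U'ᶜ`. Hereditary indecomposability makes the components of
points of `C` in `E` disjoint from those of points of `D` in `F`. In a compact Hausdorff space
the components form a totally disconnected compact Hausdorff quotient, so closed sets meeting
no common component are separated by a clopen set; doing this in `E` and then in `F` yields
disjoint `P ⊇ C`, clopen in `E`, and `Q ⊇ D`, clopen in `F`. Then `X₀ = P`, `X₂ = Q` and
`X₁ = closure (P ∪ Q)ᶜ` witness crookedness.
-/

theorem IsPreconnected.subset_left_of_subset_union_of_isClosed {X : Type*} [TopologicalSpace X]
    {s u v : Set X} (hs : IsPreconnected s) (hu : IsClosed u) (hv : IsClosed v)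
    (hsuv : s ⊆ u ∪ v) (hsep : Disjoint s (u ∩ v)) (hsu : (s ∩ u).Nonempty) : s ⊆ u := by
  rcases isPreconnected_iff_subset_of_disjoint_closed.1 hs u v hu hv hsuv hsep.inter_eq
    with h | h
  · exact h
  · obtain ⟨x, hxs, hxu⟩ := hsu
    exact absurd ⟨hxu, h hxs⟩ (hsep.notMem_of_mem_left hxs)

theorem Set.inter_closure_compl_subset {X : Type*} [TopologicalSpace X] {P Y E G : Set X}
    (hPY : P ⊆ Y) (hEP : IsClosed (E \ P)) (hG : IsClosed G) (hEG : Eᶜ ⊆ G) :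
    P ∩ closure Yᶜ ⊆ G := by
  have hY : Yᶜ ⊆ (E \ P) ∪ G := fun z hz => by
    by_cases hzE : z ∈ E
    · exact Or.inl ⟨hzE, fun hzP => hz (hPY hzP)⟩
    · exact Or.inr (hEG hzE)
  rintro z ⟨hzP, hzY⟩
  rcases (closure_minimal hY (hEP.union hG)) hzY with h | h
  · exact absurd hzP h.2
  · exact h

theorem hereditarilyIndecomposable_of_crookedBetween_singleton {X : Type*} [TopologicalSpace X]
    (hcr : ∀ a b : X, a ≠ b → CrookedBetween X {a} {b}) : HereditarilyIndecomposable X := by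
  intro A B hA hAc hB hBc hAB
  by_contra! h
  obtain ⟨⟨a, haA, haB⟩, ⟨b, hbB, hbA⟩⟩ := And.imp not_subset.1 not_subset.1 h
  obtain ⟨X₀, X₁, X₂, h₀, h₁, h₂, huniv, haX₀, h₀₁, h₀₂, h₁₂, hbX₂⟩ :=
    hcr a b (ne_of_mem_of_not_mem haA hbA) Bᶜ Aᶜ hB.isOpen_compl hA.isOpen_compl
      (singleton_subset_iff.2 haB) (singleton_subset_iff.2 hbA)
  have hAX₀ : A ⊆ X₀ := by
    refine hAc.isPreconnected.subset_left_of_subset_union_of_isClosed h₀ (h₁.union h₂)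
      (by rw [← union_assoc, huniv]; exact subset_univ A) ?_ ⟨a, haA, haX₀ rfl⟩
    rw [inter_union_distrib_left, h₀₂, union_empty]
    exact disjoint_compl_right.mono_right h₀₁
  have hBX₂ : B ⊆ X₂ := by
    refine hBc.isPreconnected.subset_left_of_subset_union_of_isClosed h₂ (h₀.union h₁)
      (by rw [union_comm, huniv]; exact subset_univ B) ?_ ⟨b, hbB, hbX₂ rfl⟩
    rw [inter_union_distrib_left, inter_comm, h₀₂, empty_union, inter_comm]
    exact disjoint_compl_right.mono_right h₁₂
  obtain ⟨q, hqA, hqB⟩ := hAB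
  exact (h₀₂ ▸ ⟨hAX₀ hqA, hBX₂ hqB⟩ : q ∈ (∅ : Set X))

theorem exists_isClopen_superset_disjoint_of_forall_disjoint_connectedComponent {Y : Type*}
    [TopologicalSpace Y] [CompactSpace Y] [T2Space Y] {K L : Set Y} (hK : IsClosed K)
    (hL : IsClosed L) (h : ∀ x ∈ K, Disjoint (connectedComponent x) L) :
    ∃ P : Set Y, IsClopen P ∧ K ⊆ P ∧ Disjoint P L := by
  have hKL : ((↑) '' K : Set (ConnectedComponents Y)) ⊆ ((↑) '' L)ᶜ := by
    rintro _ ⟨x, hx, rfl⟩ ⟨y, hy, hyx⟩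
    rw [ConnectedComponents.coe_eq_coe'] at hyx
    exact (h x hx).notMem_of_mem_right hy hyx
  obtain ⟨W, hW, hKW, hWL⟩ := exists_clopen_of_closed_subset_open
    (hK.isCompact.image ConnectedComponents.continuous_coe).isClosed
    (hL.isCompact.image ConnectedComponents.continuous_coe).isClosed.isOpen_compl hKL
  refine ⟨(↑) ⁻¹' W, hW.preimage ConnectedComponents.continuous_coe, image_subset_iff.1 hKW, ?_⟩
  exact disjoint_image_right.1 (subset_compl_iff_disjoint_right.1 hWL)

theorem isClosed_connectedComponentIn {X : Type*} [TopologicalSpace X] {E : Set X}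
    (hE : IsClosed E) (x : X) : IsClosed (connectedComponentIn E x) := by
  by_cases hx : x ∈ E
  · exact isClosed_of_closure_subset <|
      isPreconnected_connectedComponentIn.closure.subset_connectedComponentIn
        (subset_closure (mem_connectedComponentIn hx))
        (closure_minimal (connectedComponentIn_subset E x) hE)
  · rw [connectedComponentIn_eq_empty hx]
    exact isClosed_empty

theorem biUnion_connectedComponentIn_eq_image {X : Type*} [TopologicalSpace X] (E K : Set X) :
    ⋃ y ∈ K, connectedComponentIn E y =
      Subtype.val '' ⋃ y ∈ (Subtype.val ⁻¹' K : Set E), connectedComponent y := by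
  ext z
  simp only [mem_iUnion, mem_image, mem_preimage, exists_prop]
  constructor
  · rintro ⟨y, hyK, hz⟩
    have hyE := connectedComponentIn_nonempty_iff.1 ⟨z, hz⟩
    rw [connectedComponentIn_eq_image hyE] at hz
    obtain ⟨w, hw, rfl⟩ := hz
    exact ⟨w, ⟨⟨y, hyE⟩, hyK, hw⟩, rfl⟩
  · rintro ⟨w, ⟨y, hyK, hw⟩, rfl⟩
    exact ⟨y, hyK, by rw [connectedComponentIn_eq_image y.2]; exact mem_image_of_mem _ hw⟩

section CompactT2

variable {X : Type*} [TopologicalSpace X] [CompactSpace X] [T2Space X] {E : Set X}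

theorem IsClosed.exists_relClopen_superset_disjoint {K L : Set X} (hE : IsClosed E)
    (hK : IsClosed K) (hL : IsClosed L) (hKE : K ⊆ E)
    (h : ∀ x ∈ K, Disjoint (connectedComponentIn E x) L) :
    ∃ P : Set X, IsClosed P ∧ IsClosed (E \ P) ∧ K ⊆ P ∧ Disjoint P L := by
  have : CompactSpace E := isCompact_iff_compactSpace.mp hE.isCompact
  obtain ⟨P, hP, hKP, hPL⟩ :=
    exists_isClopen_superset_disjoint_of_forall_disjoint_connectedComponent (Y := E)
      (hK.preimage continuous_subtype_val) (hL.preimage continuous_subtype_val)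
      fun x hx => by
        have hxL := h x.1 hx
        rwa [connectedComponentIn_eq_image x.2, disjoint_image_left] at hxL
  have hEP : E \ Subtype.val '' P = Subtype.val '' Pᶜ := by
    rw [image_compl_eq_range_sdiff_image Subtype.val_injective, Subtype.range_coe]
  refine ⟨Subtype.val '' P, hE.isClosedMap_subtype_val _ hP.1, ?_,
    fun x hx => ⟨⟨x, hKE hx⟩, hKP hx, rfl⟩, disjoint_image_left.2 hPL⟩
  rw [hEP]
  exact hE.isClosedMap_subtype_val _ hP.compl.1

theorem IsClosed.isClosed_biUnion_connectedComponentIn {K : Set X} (hE : IsClosed E)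
    (hK : IsClosed K) : IsClosed (⋃ y ∈ K, connectedComponentIn E y) := by
  have : CompactSpace E := isCompact_iff_compactSpace.mp hE.isCompact
  rw [biUnion_connectedComponentIn_eq_image, ← connectedComponents_preimage_image]
  exact hE.isClosedMap_subtype_val _ <|
    ((hK.preimage continuous_subtype_val).isCompact.image
      ConnectedComponents.continuous_coe).isClosed.preimage ConnectedComponents.continuous_coe

end CompactT2

namespace HereditarilyIndecomposable

variable {X : Type*} [TopologicalSpace X]

theorem disjoint_connectedComponentIn (hHI : HereditarilyIndecomposable X) {E F : Set X}
    {x y : X} (hE : IsClosed E) (hF : IsClosed F) (hxE : x ∈ E) (hxF : x ∉ F) (hyF : y ∈ F)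
    (hyE : y ∉ E) : Disjoint (connectedComponentIn E x) (connectedComponentIn F y) := by
  rw [disjoint_iff_inter_eq_empty, ← not_nonempty_iff_eq_empty]
  intro hmeet
  rcases hHI _ _ (isClosed_connectedComponentIn hE x)
      (isConnected_connectedComponentIn_iff.2 hxE) (isClosed_connectedComponentIn hF y)
      (isConnected_connectedComponentIn_iff.2 hyF) hmeet with h | h
  · exact hxF (connectedComponentIn_subset F y (h (mem_connectedComponentIn hxE)))
  · exact hyE (connectedComponentIn_subset E x (h (mem_connectedComponentIn hyF)))

variable [CompactSpace X] [T2Space X]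

theorem exists_relClopen_separation (hHI : HereditarilyIndecomposable X) {C D E F : Set X}
    (hC : IsClosed C) (hD : IsClosed D) (hE : IsClosed E) (hF : IsClosed F) (hCE : C ⊆ E)
    (hDF : D ⊆ F) (hCF : Disjoint C F) (hDE : Disjoint D E) :
    ∃ P Q : Set X, IsClosed P ∧ IsClosed (E \ P) ∧ IsClosed Q ∧ IsClosed (F \ Q) ∧
      C ⊆ P ∧ D ⊆ Q ∧ Disjoint P Q := by
  obtain ⟨P, hP, hEP, hCP, hPD⟩ := hE.exists_relClopen_superset_disjoint hC
    (hF.isClosed_biUnion_connectedComponentIn hD) hCE fun x hx =>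
      disjoint_iUnion₂_right.2 fun y hy => hHI.disjoint_connectedComponentIn hE hF (hCE hx)
        (hCF.notMem_of_mem_left hx) (hDF hy) (hDE.notMem_of_mem_left hy)
  obtain ⟨Q, hQ, hFQ, hDQ, hQP⟩ := hF.exists_relClopen_superset_disjoint hD hP hDF fun y hy =>
    (hPD.mono_right (subset_biUnion_of_mem hy)).symm
  exact ⟨P, Q, hP, hEP, hQ, hFQ, hCP, hDQ, hQP.symm⟩

theorem crookedBetween (hHI : HereditarilyIndecomposable X) {C D : Set X} (hC : IsClosed C)
    (hD : IsClosed D) (hCD : Disjoint C D) : CrookedBetween X C D := by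
  intro U V hU hV hCU hDV
  obtain ⟨U', hU', hCU', hU'U⟩ := normal_exists_closure_subset hC (hU.inter hD.isOpen_compl)
    (subset_inter hCU hCD.subset_compl_right)
  obtain ⟨V', hV', hDV', hV'V⟩ := normal_exists_closure_subset hD (hV.inter hC.isOpen_compl)
    (subset_inter hDV hCD.subset_compl_left)
  obtain ⟨P, Q, hP, hEP, hQ, hFQ, hCP, hDQ, hPQ⟩ := hHI.exists_relClopen_separation hC hD
    hV'.isClosed_compl hU'.isClosed_compl
    (fun c hc hcV' => (hV'V (subset_closure hcV')).2 hc)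
    (fun d hd hdU' => (hU'U (subset_closure hdU')).2 hd)
    (disjoint_compl_right.mono_left hCU') (disjoint_compl_right.mono_left hDV')
  refine ⟨P, closure (P ∪ Q)ᶜ, Q, hP, isClosed_closure, hQ, ?_, hCP, ?_, hPQ.inter_eq, ?_, hDQ⟩
  · rw [union_right_comm, ← univ_subset_iff, ← union_compl_self (P ∪ Q)]
    exact union_subset_union_right _ subset_closure
  · exact (inter_closure_compl_subset subset_union_left hEP isClosed_closure
      (by rw [compl_compl]; exact subset_closure)).trans (hV'V.trans inter_subset_left)
  · rw [inter_comm]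
    exact (inter_closure_compl_subset subset_union_right hFQ isClosed_closure
      (by rw [compl_compl]; exact subset_closure)).trans (hU'U.trans inter_subset_left)

end HereditarilyIndecomposable

/-- (Krasinkiewicz–Minc) A compact Hausdorff space is hereditarily indecomposable iff
it is crooked between every pair of disjoint nonempty closed subsets. -/
theorem hereditarilyIndecomposable_iff_crooked
    (X : Type*) [TopologicalSpace X] [CompactSpace X] [T2Space X] :
    HereditarilyIndecomposable X ↔
      ∀ C D : Set X, IsClosed C → IsClosed D → C.Nonempty → D.Nonempty →
        Disjoint C D → CrookedBetween X C D := by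
  refine ⟨fun hHI C D hC hD _ _ hCD => hHI.crookedBetween hC hD hCD, fun hcr => ?_⟩
  exact hereditarilyIndecomposable_of_crookedBetween_singleton fun a b hab =>
    hcr {a} {b} isClosed_singleton isClosed_singleton (singleton_nonempty a)
      (singleton_nonempty b) (disjoint_singleton.2 hab)
end

section
/- (Factorization theorem) Let f : Y → X be a continuous surjection between compact Hausdorff spaces and let κ be an infinite cardinal such that X admits a base for its topology of cardinality at most κ. Then there exist a compact Hausdorff space Z admitting a base of cardinality at most κ and continuous surjections g : Y → Z and h : Z → X with f = h ∘ g, such that moreover: if Y is hereditarily indecomposable then so is Z, and if f is weakly confluent then so is h. -/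
/-!
Call `(q, p)` a crooked pair for closed `A ⊆ U`, `B ⊆ V` (`U`, `V` open, `A ∩ V = B ∩ U = ∅`)
if `q = 0` on `A`, `p = 0` on `B`, `q` takes only the values `0, 1` off `V`, `p` only `0, 1` off
`U`, and `q`, `p` have no common zero outside `U ∪ V` (Krasinkiewicz–Minc). If crooked pairs always
exist, the space is hereditarily indecomposable: for continua `K`, `L` through `x` with `a ∈ K \ L`,
`b ∈ L \ K`, a crooked pair for `({a}, {b}, Lᶜ, Kᶜ)` is constant on `K` and on `L`, so both maps
vanish at `x ∉ Lᶜ ∪ Kᶜ`. Conversely, in a hereditarily indecomposable compact space no continuum in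
`Vᶜ` meeting `A` meets a continuum in `Uᶜ` meeting `B`; since components of compact spaces are
quasi-components, this yields disjoint relatively clopen neighbourhoods of `A` in `Vᶜ` and of `B`
in `Uᶜ`, and Urysohn extensions of their indicators form a crooked pair.

`Z` is the image of `Y` in `ℝ ^ F` under evaluation, where `F` is a Löwenheim–Skolem closure of
size `κ`: it contains the pullbacks of a point-separating family on `X` (so `f` factors through
`Z`) and the rational constants, is closed under `⊓`, `⊔`, `-`, and contains a crooked pair for
`({φ ≥ 0}, {ψ ≥ 0}, {χ > 0}, {ω > 0})` whenever `φ, ψ, χ, ω ∈ F` and one exists. By compactness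
the sets `{φ > 0}` with `φ ∈ F` form a base of `Z`, and every closed set inside an open one can be
squeezed between `{φ > 0}` and `{φ ≥ 0}`. Squeezing the data on `Z` this way pulls a crooked pair
back from `Y`.
-/

open Set Topology Function

universe u

/-- A continuous surjection `f : Y → X` is weakly confluent if every subcontinuum
(nonempty closed connected subset) of `X` is the image of a subcontinuum of `Y`. -/
def WeaklyConfluent {Y X : Type*} [TopologicalSpace Y] [TopologicalSpace X]
    (f : Y → X) : Prop :=
  ∀ K : Set X, IsClosed K → IsConnected K →
    ∃ L : Set Y, IsClosed L ∧ IsConnected L ∧ f '' L = K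

open Cardinal in
theorem Cardinal.exists_superset_closed_under {α : Type u} {κ : Cardinal.{u}} (hκ : ℵ₀ ≤ κ)
    {n : ℕ} (Φ : (Fin n → α) → Set α) (hΦ : ∀ v, (Φ v).Countable) {S₀ : Set α}
    (hS₀ : #S₀ ≤ κ) :
    ∃ S, S₀ ⊆ S ∧ #S ≤ κ ∧ ∀ v : Fin n → α, (∀ i, v i ∈ S) → Φ v ⊆ S := by
  let step (S : Set α) : Set α := S ∪ ⋃ v : Fin n → S, Φ (fun i => v i)
  have card_step {S : Set α} (hS : #S ≤ κ) : #(step S) ≤ κ := by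
    have hv : #(Fin n → S) ≤ κ := by
      rw [mk_arrow, lift_uzero, mk_fin, lift_natCast]
      exact (power_le_power_right hS).trans (power_nat_le hκ)
    calc #(step S) ≤ #S + #(Fin n → S) * ⨆ v : Fin n → S, #(Φ (fun i => v i)) :=
          (mk_union_le _ _).trans (add_le_add le_rfl (mk_iUnion_le _))
      _ ≤ κ + κ * ℵ₀ := by
          gcongr
          exact ciSup_le' fun v => (hΦ _).le_aleph0
      _ = κ := by rw [mul_aleph0_eq hκ, add_eq_self hκ]
  let T (k : ℕ) : Set α := step^[k] S₀
  have hT_succ (k : ℕ) : T (k + 1) = step (T k) := iterate_succ_apply' _ _ _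
  have hT_mono : Monotone T :=
    monotone_nat_of_le_succ fun k => (hT_succ k).symm ▸ subset_union_left
  have hT_card (k : ℕ) : #(T k) ≤ κ := by
    induction k with
    | zero => exact hS₀
    | succ k ih => rw [hT_succ]; exact card_step ih
  refine ⟨⋃ k, T k, subset_iUnion T 0, ?_, fun v hv => ?_⟩
  · have h := mk_iUnion_le_lift T
    simp only [lift_uzero, mk_nat, lift_aleph0] at h
    exact h.trans ((mul_le_mul' hκ (ciSup_le' hT_card)).trans (mul_eq_self hκ).le)
  · choose k hk using fun i => mem_iUnion.mp (hv i)
    let K := Finset.univ.sup k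
    have hvK (i : Fin n) : v i ∈ T K := hT_mono (Finset.le_sup (Finset.mem_univ i)) (hk i)
    calc Φ v ⊆ step (T K) :=
          (subset_iUnion (fun w : Fin n → T K => Φ (fun i => w i))
            (fun i => ⟨v i, hvK i⟩)).trans subset_union_right
      _ = T (K + 1) := (hT_succ K).symm
      _ ⊆ ⋃ k, T k := subset_iUnion T _

section CrookedPair

variable {Z : Type*}

def IsCrookedPair (A B U V : Set Z) (q p : Z → ℝ) : Prop :=
  EqOn q 0 A ∧ EqOn p 0 B ∧ MapsTo q Vᶜ {0, 1} ∧ MapsTo p Uᶜ {0, 1} ∧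
    ∀ z, q z = 0 → p z = 0 → z ∈ U ∪ V

variable (Z) in
def HasCrookedPairs [TopologicalSpace Z] : Prop :=
  ∀ A B U V : Set Z, IsClosed A → IsClosed B → IsOpen U → IsOpen V → A ⊆ U → B ⊆ V →
    Disjoint A V → Disjoint B U → ∃ q p : C(Z, ℝ), IsCrookedPair A B U V q p

theorem IsCrookedPair.mono {A B U V A' B' U' V' : Set Z} {q p : Z → ℝ}
    (h : IsCrookedPair A B U V q p) (hA : A' ⊆ A) (hB : B' ⊆ B) (hU : U ⊆ U') (hV : V ⊆ V') :
    IsCrookedPair A' B' U' V' q p :=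
  ⟨h.1.mono hA, h.2.1.mono hB, h.2.2.1.mono_left (compl_subset_compl.mpr hV),
    h.2.2.2.1.mono_left (compl_subset_compl.mpr hU),
    fun z hq hp => union_subset_union hU hV (h.2.2.2.2 z hq hp)⟩

theorem IsCrookedPair.of_comp {Y : Type*} {g : Y → Z} (hg : Surjective g) {A B U V : Set Z}
    {q p : Z → ℝ}
    (h : IsCrookedPair (g ⁻¹' A) (g ⁻¹' B) (g ⁻¹' U) (g ⁻¹' V) (q ∘ g) (p ∘ g)) :
    IsCrookedPair A B U V q p := by
  obtain ⟨hqA, hpB, hqV, hpU, hqp⟩ := h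
  refine ⟨fun z hz => ?_, fun z hz => ?_, fun z hz => ?_, fun z hz => ?_, fun z => ?_⟩ <;>
    obtain ⟨y, rfl⟩ := hg z
  exacts [hqA hz, hpB hz, hqV hz, hpU hz, hqp y]

theorem HasCrookedPairs.hereditarilyIndecomposable [TopologicalSpace Z] [T1Space Z]
    (hZ : HasCrookedPairs Z) : HereditarilyIndecomposable Z := by
  intro K L hK hKc hL hLc ⟨x, hxK, hxL⟩
  by_contra! hKL
  obtain ⟨a, haK, haL⟩ := not_subset.mp hKL.1
  obtain ⟨b, hbL, hbK⟩ := not_subset.mp hKL.2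
  obtain ⟨q, p, hqa, hpb, hqK, hpL, hqp⟩ := hZ {a} {b} Lᶜ Kᶜ isClosed_singleton
    isClosed_singleton hL.isOpen_compl hK.isOpen_compl (singleton_subset_iff.mpr haL)
    (singleton_subset_iff.mpr hbK) (disjoint_singleton_left.mpr (not_not.mpr haK))
    (disjoint_singleton_left.mpr (not_not.mpr hbL))
  have hqx : q x = 0 := (hKc.isPreconnected.constant_of_mapsTo (toFinite _).isDiscrete
    q.continuous.continuousOn (by simpa using hqK) hxK haK).trans (hqa rfl)
  have hpx : p x = 0 := (hLc.isPreconnected.constant_of_mapsTo (toFinite _).isDiscrete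
    p.continuous.continuousOn (by simpa using hpL) hxL hbL).trans (hpb rfl)
  rcases hqp x hqx hpx with h | h
  exacts [h hxL, h hxK]

end CrookedPair

theorem exists_isClopen_superset_notMem {K : Type*} [TopologicalSpace K] [CompactSpace K]
    [T2Space K] {A : Set K} (hA : IsClosed A) {x : K} (hx : Disjoint (connectedComponent x) A) :
    ∃ C, IsClopen C ∧ A ⊆ C ∧ x ∉ C := by
  have : Nonempty {s : Set K // IsClopen s ∧ x ∈ s} := ⟨⟨univ, isClopen_univ, mem_univ x⟩⟩
  rw [connectedComponent_eq_iInter_isClopen, disjoint_iff_inter_eq_empty, inter_comm] at hx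
  obtain ⟨⟨D, hD, hxD⟩, hDA⟩ := hA.isCompact.elim_directed_family_closed _
    (fun s => s.2.1.isClosed) hx
    fun s t => ⟨⟨s ∩ t, s.2.1.inter t.2.1, s.2.2, t.2.2⟩, inter_subset_left, inter_subset_right⟩
  exact ⟨Dᶜ, hD.compl, fun a ha haD => (eq_empty_iff_forall_notMem.mp hDA) a ⟨ha, haD⟩,
    not_not.mpr hxD⟩

open Classical in
theorem IsClosed.exists_continuousMap_eq_ite {Y : Type*} [TopologicalSpace Y] [NormalSpace Y]
    {K : Set Y} (hK : IsClosed K) {Q : Set K} (hQ : IsClopen Q) :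
    ∃ q : C(Y, ℝ), ∀ z : K, q z = if z ∈ Q then 0 else 1 := by
  obtain ⟨q, hq0, hq1, -⟩ := exists_continuous_zero_one_of_isClosed
    (hK.isClosedMap_subtype_val _ hQ.isClosed) (hK.isClosedMap_subtype_val _ hQ.compl.isClosed)
    ((disjoint_image_iff Subtype.val_injective).mpr disjoint_compl_right)
  refine ⟨q, fun z => ?_⟩
  split_ifs with hz
  exacts [hq0 (mem_image_of_mem _ hz), hq1 (mem_image_of_mem _ hz)]

section HereditarilyIndecomposable

variable {Y : Type*} [TopologicalSpace Y] [CompactSpace Y] [T2Space Y] {A B U V : Set Y}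

theorem IsClosed.exists_isClopen_notMem_image {K : Set Y} (hK : IsClosed K) (hA : IsClosed A)
    {x : K} (hx : Disjoint (connectedComponent x) (Subtype.val ⁻¹' A)) :
    ∃ Q : Set K, IsClopen Q ∧ Subtype.val ⁻¹' A ⊆ Q ∧ x.1 ∉ Subtype.val '' Q := by
  have : CompactSpace K := isCompact_iff_compactSpace.mp hK.isCompact
  obtain ⟨Q, hQ, hAQ, hxQ⟩ :=
    exists_isClopen_superset_notMem (hA.preimage continuous_subtype_val) hx
  exact ⟨Q, hQ, hAQ, fun ⟨y, hyQ, hyx⟩ => hxQ (Subtype.ext hyx ▸ hyQ)⟩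

theorem HereditarilyIndecomposable.exists_isClopen_notMem (hY : HereditarilyIndecomposable Y)
    (hA : IsClosed A) (hB : IsClosed B) (hU : IsOpen U) (hV : IsOpen V) (hAU : A ⊆ U)
    (hBV : B ⊆ V) (x : Y) :
    ∃ Q : Set ↥Vᶜ, IsClopen Q ∧ Subtype.val ⁻¹' A ⊆ Q ∧
      ∃ P : Set ↥Uᶜ, IsClopen P ∧ Subtype.val ⁻¹' B ⊆ P ∧
        x ∉ Subtype.val '' Q ∩ Subtype.val '' P := by
  by_cases hxV : x ∈ V
  · exact ⟨univ, isClopen_univ, subset_univ _, univ, isClopen_univ, subset_univ _,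
      fun ⟨⟨y, _, hyx⟩, _⟩ => y.2 (hyx ▸ hxV)⟩
  by_cases hxU : x ∈ U
  · exact ⟨univ, isClopen_univ, subset_univ _, univ, isClopen_univ, subset_univ _,
      fun ⟨_, ⟨y, _, hyx⟩⟩ => y.2 (hyx ▸ hxU)⟩
  let x₁ : ↥Vᶜ := ⟨x, hxV⟩
  let x₂ : ↥Uᶜ := ⟨x, hxU⟩
  have continuum {K : Set Y} (hK : IsClosed K) (z : K) :
      IsClosed (Subtype.val '' connectedComponent z) ∧
        IsConnected (Subtype.val '' connectedComponent z) :=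
    ⟨hK.isClosedMap_subtype_val _ isClosed_connectedComponent,
      isConnected_connectedComponent.image _ continuous_subtype_val.continuousOn⟩
  have hx : Disjoint (connectedComponent x₁) (Subtype.val ⁻¹' A) ∨
      Disjoint (connectedComponent x₂) (Subtype.val ⁻¹' B) := by
    by_contra! h
    obtain ⟨a, haK, haA⟩ := not_disjoint_iff.mp h.1
    obtain ⟨b, hbK, hbB⟩ := not_disjoint_iff.mp h.2
    obtain ⟨hK₁c, hK₁⟩ := continuum hV.isClosed_compl x₁
    obtain ⟨hK₂c, hK₂⟩ := continuum hU.isClosed_compl x₂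
    rcases hY _ _ hK₁c hK₁ hK₂c hK₂ ⟨x, ⟨x₁, mem_connectedComponent, rfl⟩,
      ⟨x₂, mem_connectedComponent, rfl⟩⟩ with h | h
    · obtain ⟨c, -, hc⟩ := h ⟨a, haK, rfl⟩
      exact c.2 (hc ▸ hAU haA)
    · obtain ⟨c, -, hc⟩ := h ⟨b, hbK, rfl⟩
      exact c.2 (hc ▸ hBV hbB)
  rcases hx with h | h
  · obtain ⟨Q, hQ, hAQ, hxQ⟩ := hV.isClosed_compl.exists_isClopen_notMem_image hA h
    exact ⟨Q, hQ, hAQ, univ, isClopen_univ, subset_univ _, fun hx => hxQ hx.1⟩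
  · obtain ⟨P, hP, hBP, hxP⟩ := hU.isClosed_compl.exists_isClopen_notMem_image hB h
    exact ⟨univ, isClopen_univ, subset_univ _, P, hP, hBP, fun hx => hxP hx.2⟩

theorem HereditarilyIndecomposable.exists_isClopen_pair (hY : HereditarilyIndecomposable Y)
    (hA : IsClosed A) (hB : IsClosed B) (hU : IsOpen U) (hV : IsOpen V) (hAU : A ⊆ U)
    (hBV : B ⊆ V) :
    ∃ Q : Set ↥Vᶜ, IsClopen Q ∧ Subtype.val ⁻¹' A ⊆ Q ∧
      ∃ P : Set ↥Uᶜ, IsClopen P ∧ Subtype.val ⁻¹' B ⊆ P ∧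
        Disjoint (Subtype.val '' Q) (Subtype.val '' P) := by
  let ι := {Q : Set ↥Vᶜ // IsClopen Q ∧ Subtype.val ⁻¹' A ⊆ Q} ×
    {P : Set ↥Uᶜ // IsClopen P ∧ Subtype.val ⁻¹' B ⊆ P}
  have : Nonempty ι :=
    ⟨⟨univ, isClopen_univ, subset_univ _⟩, ⟨univ, isClopen_univ, subset_univ _⟩⟩
  obtain ⟨⟨⟨Q, hQ, hAQ⟩, ⟨P, hP, hBP⟩⟩, hQP⟩ := isCompact_univ.elim_directed_family_closed
    (fun i : ι => Subtype.val '' i.1.1 ∩ Subtype.val '' i.2.1)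
    (fun i => (hV.isClosed_compl.isClosedMap_subtype_val _ i.1.2.1.isClosed).inter
      (hU.isClosed_compl.isClosedMap_subtype_val _ i.2.2.1.isClosed))
    (by
      refine eq_empty_iff_forall_notMem.mpr fun x ⟨_, hx⟩ => ?_
      obtain ⟨Q, hQ, hAQ, P, hP, hBP, hxQP⟩ := hY.exists_isClopen_notMem hA hB hU hV hAU hBV x
      exact hxQP (mem_iInter.mp hx ⟨⟨Q, hQ, hAQ⟩, ⟨P, hP, hBP⟩⟩))
    (fun i j => ⟨⟨⟨i.1.1 ∩ j.1.1, i.1.2.1.inter j.1.2.1, subset_inter i.1.2.2 j.1.2.2⟩,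
        ⟨i.2.1 ∩ j.2.1, i.2.2.1.inter j.2.2.1, subset_inter i.2.2.2 j.2.2.2⟩⟩,
      inter_subset_inter (image_mono inter_subset_left) (image_mono inter_subset_left),
      inter_subset_inter (image_mono inter_subset_right) (image_mono inter_subset_right)⟩)
  exact ⟨Q, hQ, hAQ, P, hP, hBP, disjoint_iff_inter_eq_empty.mpr (by simpa using hQP)⟩

theorem HereditarilyIndecomposable.hasCrookedPairs (hY : HereditarilyIndecomposable Y) :
    HasCrookedPairs Y := by
  intro A B U V hA hB hU hV hAU hBV hAV hBU
  obtain ⟨Q, hQ, hAQ, P, hP, hBP, hQP⟩ := hY.exists_isClopen_pair hA hB hU hV hAU hBV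
  obtain ⟨q, hq⟩ := hV.isClosed_compl.exists_continuousMap_eq_ite hQ
  obtain ⟨p, hp⟩ := hU.isClosed_compl.exists_continuousMap_eq_ite hP
  refine ⟨q, p, fun a ha => ?_, fun b hb => ?_, fun z hz => ?_, fun z hz => ?_,
    fun z hqz hpz => ?_⟩
  · exact (hq ⟨a, disjoint_left.mp hAV ha⟩).trans (if_pos (hAQ ha))
  · exact (hp ⟨b, disjoint_left.mp hBU hb⟩).trans (if_pos (hBP hb))
  · rw [hq ⟨z, hz⟩]; split_ifs <;> simp
  · rw [hp ⟨z, hz⟩]; split_ifs <;> simp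
  · by_contra hz
    obtain ⟨hzU, hzV⟩ := not_or.mp hz
    have hzQ : (⟨z, hzV⟩ : ↥Vᶜ) ∈ Q := by
      by_contra h
      simp [hq ⟨z, hzV⟩, h] at hqz
    have hzP : (⟨z, hzU⟩ : ↥Uᶜ) ∈ P := by
      by_contra h
      simp [hp ⟨z, hzU⟩, h] at hpz
    exact disjoint_left.mp hQP (mem_image_of_mem _ hzQ) (mem_image_of_mem _ hzP)

end HereditarilyIndecomposable

structure IsRationalLattice {Y : Type*} [TopologicalSpace Y] (F : Set C(Y, ℝ)) : Prop where
  const_mem (r : ℚ) : ContinuousMap.const Y (r : ℝ) ∈ F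
  inf_mem {φ χ : C(Y, ℝ)} : φ ∈ F → χ ∈ F → φ ⊓ χ ∈ F
  sup_mem {φ χ : C(Y, ℝ)} : φ ∈ F → χ ∈ F → φ ⊔ χ ∈ F
  sub_mem {φ χ : C(Y, ℝ)} : φ ∈ F → χ ∈ F → φ - χ ∈ F

def ReflectsCrookedPairs {Y : Type*} [TopologicalSpace Y] (F : Set C(Y, ℝ)) : Prop :=
  ∀ φA ∈ F, ∀ φB ∈ F, ∀ φU ∈ F, ∀ φV ∈ F,
    (∃ q p : C(Y, ℝ), IsCrookedPair {y | 0 ≤ φA y} {y | 0 ≤ φB y} {y | 0 < φU y}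
      {y | 0 < φV y} q p) →
    ∃ q ∈ F, ∃ p ∈ F, IsCrookedPair {y | 0 ≤ φA y} {y | 0 ≤ φB y} {y | 0 < φU y}
      {y | 0 < φV y} q p

open Cardinal in
theorem exists_superset_isRationalLattice_reflectsCrookedPairs {Y : Type u} [TopologicalSpace Y]
    {κ : Cardinal.{u}} (hκ : ℵ₀ ≤ κ) {F₀ : Set C(Y, ℝ)} (hF₀ : #F₀ ≤ κ) :
    ∃ F, F₀ ⊆ F ∧ #F ≤ κ ∧ IsRationalLattice F ∧ ReflectsCrookedPairs F := by
  let crooked (v : Fin 4 → C(Y, ℝ)) (w : C(Y, ℝ) × C(Y, ℝ)) : Prop :=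
    IsCrookedPair {y | 0 ≤ v 0 y} {y | 0 ≤ v 1 y} {y | 0 < v 2 y} {y | 0 < v 3 y} w.1 w.2
  let w (v : Fin 4 → C(Y, ℝ)) := Classical.epsilon (crooked v)
  obtain ⟨F, hF₀F, hFκ, hF⟩ := exists_superset_closed_under hκ
    (fun v => {v 0 ⊓ v 1, v 0 ⊔ v 1, v 0 - v 1, (w v).1, (w v).2})
    (fun _ => (toFinite _).countable) (S₀ := F₀ ∪ range fun r : ℚ => ContinuousMap.const Y r)
    ((mk_union_le _ _).trans (add_le_of_le hκ hF₀ ((countable_range _).le_aleph0.trans hκ)))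
  have hmem {a b c d : C(Y, ℝ)} (ha : a ∈ F) (hb : b ∈ F) (hc : c ∈ F) (hd : d ∈ F) :
      {a ⊓ b, a ⊔ b, a - b, (w ![a, b, c, d]).1, (w ![a, b, c, d]).2} ⊆ F :=
    hF ![a, b, c, d] fun i => by fin_cases i <;> assumption
  refine ⟨F, subset_union_left.trans hF₀F, hFκ,
    ⟨fun r => hF₀F (Or.inr ⟨r, rfl⟩), fun ha hb => hmem ha hb ha ha (by simp),
      fun ha hb => hmem ha hb ha ha (by simp), fun ha hb => hmem ha hb ha ha (by simp)⟩,
    fun a ha b hb c hc d hd ⟨q, p, hqp⟩ => ⟨(w ![a, b, c, d]).1, hmem ha hb hc hd (by simp),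
      (w ![a, b, c, d]).2, hmem ha hb hc hd (by simp),
      Classical.epsilon_spec (p := crooked ![a, b, c, d]) ⟨(q, p), hqp⟩⟩⟩

section

variable {Y : Type*} [TopologicalSpace Y] (F : Set C(Y, ℝ))

abbrev FactorSpace := range fun (y : Y) (ψ : F) => ψ.1 y

namespace FactorSpace

def mk : C(Y, FactorSpace F) :=
  ⟨rangeFactorization _, (continuous_pi fun ψ => ψ.1.continuous).subtype_mk _⟩

theorem mk_surjective : Surjective (mk F) := rangeFactorization_surjective

theorem mk_eq_mk_iff {y y' : Y} : mk F y = mk F y' ↔ ∀ ψ ∈ F, ψ y = ψ y' :=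
  Subtype.ext_iff.trans (funext_iff.trans Subtype.forall)

instance [CompactSpace Y] : CompactSpace (FactorSpace F) :=
  isCompact_iff_compactSpace.mp (isCompact_range (continuous_pi fun ψ => ψ.1.continuous))

theorem exists_comp_eq [CompactSpace Y] {X : Type*} [TopologicalSpace X] (f : C(Y, X))
    (hf : FactorsThrough f (mk F)) : ∃ h : C(FactorSpace F, X), h.comp (mk F) = f :=
  have hq := (mk F).continuous.isClosedMap.isQuotientMap (mk F).continuous (mk_surjective F)
  ⟨hq.lift f hf, hq.lift_comp f hf⟩

def coord (ψ : F) : C(FactorSpace F, ℝ) :=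
  ⟨fun z => z.1 ψ, (continuous_apply ψ).comp continuous_subtype_val⟩

variable {F} [CompactSpace Y] (hF : IsRationalLattice F)
include hF

theorem exists_pos_of_mk_mem {G : Set (FactorSpace F)} (hG : IsOpen G) {y₀ : Y}
    (hy₀ : mk F y₀ ∈ G) : ∃ ψ ∈ F, 0 < ψ y₀ ∧ ∀ y, 0 ≤ ψ y → mk F y ∈ G := by
  have hsep (y : Y) (hy : mk F y ∉ G) : ∃ ψ ∈ F, 0 < ψ y₀ ∧ ψ y < 0 := by
    obtain ⟨φ, hφ, hne⟩ : ∃ φ ∈ F, φ y ≠ φ y₀ := by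
      by_contra! h
      exact hy ((mk_eq_mk_iff F).mpr h ▸ hy₀)
    rcases hne.lt_or_gt with hlt | hlt <;> obtain ⟨r, h₁, h₂⟩ := exists_rat_btwn hlt
    · exact ⟨φ - ContinuousMap.const Y (r : ℝ), hF.sub_mem hφ (hF.const_mem r),
        by simpa using h₂, by simpa using h₁⟩
    · exact ⟨ContinuousMap.const Y (r : ℝ) - φ, hF.sub_mem (hF.const_mem r) hφ,
        by simpa using h₁, by simpa using h₂⟩
  let ι := {ψ : C(Y, ℝ) // ψ ∈ F ∧ 0 < ψ y₀}
  have : Nonempty ι := ⟨⟨ContinuousMap.const Y ((1 : ℚ) : ℝ), hF.const_mem 1, by simp⟩⟩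
  obtain ⟨⟨ψ, hψF, hψ⟩, hψG⟩ :=
    (hG.isClosed_compl.preimage (mk F).continuous).isCompact.elim_directed_family_closed
      (fun ψ : ι => {y | 0 ≤ ψ.1 y}) (fun ψ => isClosed_le continuous_const ψ.1.continuous)
      (eq_empty_iff_forall_notMem.mpr fun y ⟨hy, hyψ⟩ => by
        obtain ⟨ψ, hψF, hψ, hψy⟩ := hsep y hy
        exact (mem_iInter.mp hyψ ⟨ψ, hψF, hψ⟩).not_gt hψy)
      (fun ψ χ => ⟨⟨ψ.1 ⊓ χ.1, hF.inf_mem ψ.2.1 χ.2.1, lt_min ψ.2.2 χ.2.2⟩,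
        fun y (hy : 0 ≤ (ψ.1 ⊓ χ.1) y) => (le_inf_iff.mp hy).1,
        fun y (hy : 0 ≤ (ψ.1 ⊓ χ.1) y) => (le_inf_iff.mp hy).2⟩)
  exact ⟨ψ, hψF, hψ, fun y hy => by_contra fun h =>
    (eq_empty_iff_forall_notMem.mp hψG) y ⟨h, hy⟩⟩

theorem exists_coord_pos_on {K G : Set (FactorSpace F)} (hK : IsClosed K) (hG : IsOpen G)
    (hKG : K ⊆ G) :
    ∃ ψ : F, K ⊆ {z | 0 < coord F ψ z} ∧ {z | 0 ≤ coord F ψ z} ⊆ G := by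
  let ι := {ψ : C(Y, ℝ) // ψ ∈ F ∧ ∀ y, 0 ≤ ψ y → mk F y ∈ G}
  have : Nonempty ι := ⟨⟨ContinuousMap.const Y ((-1 : ℚ) : ℝ), hF.const_mem (-1),
    fun y hy => by norm_num at hy⟩⟩
  obtain ⟨⟨ψ, hψF, hψG⟩, hKψ⟩ :=
    (hK.preimage (mk F).continuous).isCompact.elim_directed_cover
      (fun ψ : ι => {y | 0 < ψ.1 y}) (fun ψ => isOpen_lt continuous_const ψ.1.continuous)
      (fun y hy => by
        obtain ⟨ψ, hψF, hψ, hψG⟩ := exists_pos_of_mk_mem hF hG (hKG hy)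
        exact mem_iUnion.mpr ⟨⟨ψ, hψF, hψG⟩, hψ⟩)
      (fun ψ χ => ⟨⟨ψ.1 ⊔ χ.1, hF.sup_mem ψ.2.1 χ.2.1, fun y hy => by
          rcases le_sup_iff.mp hy with h | h
          exacts [ψ.2.2 y h, χ.2.2 y h]⟩,
        fun y (hy : 0 < ψ.1 y) => lt_sup_iff.mpr (Or.inl hy),
        fun y (hy : 0 < χ.1 y) => lt_sup_iff.mpr (Or.inr hy)⟩)
  refine ⟨⟨ψ, hψF⟩, fun z hz => ?_, fun z hz => ?_⟩ <;> obtain ⟨y, rfl⟩ := mk_surjective F z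
  exacts [hKψ hz, hψG y hz]

theorem isTopologicalBasis_coord_pos :
    TopologicalSpace.IsTopologicalBasis (range fun ψ : F => {z | 0 < coord F ψ z}) := by
  refine TopologicalSpace.isTopologicalBasis_of_isOpen_of_nhds ?_ fun z G hz hG => ?_
  · rintro _ ⟨ψ, rfl⟩
    exact isOpen_lt continuous_const (coord F ψ).continuous
  · obtain ⟨ψ, hzψ, hψG⟩ :=
      exists_coord_pos_on hF isClosed_singleton hG (singleton_subset_iff.mpr hz)
    exact ⟨_, ⟨ψ, rfl⟩, hzψ rfl, fun w (hw : 0 < coord F ψ w) => hψG hw.le⟩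

theorem hasCrookedPairs (hc : ReflectsCrookedPairs F) (hY : HasCrookedPairs Y) :
    HasCrookedPairs (FactorSpace F) := by
  intro A B U V hA hB hU hV hAU hBV hAV hBU
  have isOpen_pos (ψ : F) : IsOpen {z | 0 < coord F ψ z} :=
    isOpen_lt continuous_const (coord F ψ).continuous
  have isClosed_nonneg (ψ : F) : IsClosed {z | 0 ≤ coord F ψ z} :=
    isClosed_le continuous_const (coord F ψ).continuous
  -- Shrink `A`, `B`, `U`, `V` to sign sets of coordinates, keeping the hypotheses.
  obtain ⟨ψV, hBψV, hψVV⟩ := exists_coord_pos_on hF hB hV hBV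
  obtain ⟨ψU, hAψU, hψUU⟩ := exists_coord_pos_on hF hA (hU.sdiff (isClosed_nonneg ψV))
    fun a ha => ⟨hAU ha, fun h => disjoint_left.mp hAV ha (hψVV h)⟩
  obtain ⟨ψA, hAψA, hψAU⟩ := exists_coord_pos_on hF hA (isOpen_pos ψU) hAψU
  obtain ⟨ψB, hBψB, hψBV⟩ := exists_coord_pos_on hF hB
    ((isOpen_pos ψV).sdiff (isClosed_nonneg ψU))
    fun b hb => ⟨hBψV hb, fun h => disjoint_left.mp hBU hb (hψUU h).1⟩
  have hA'V' : Disjoint {z | 0 ≤ coord F ψA z} {z | 0 < coord F ψV z} :=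
    disjoint_left.mpr fun z hz (hz' : 0 < coord F ψV z) =>
      (hψUU (show 0 ≤ coord F ψU z from (hψAU hz).le)).2 hz'.le
  have hB'U' : Disjoint {z | 0 ≤ coord F ψB z} {z | 0 < coord F ψU z} :=
    disjoint_left.mpr fun z hz (hz' : 0 < coord F ψU z) => (hψBV hz).2 hz'.le
  obtain ⟨q, p, hqp⟩ := hY _ _ _ _ ((isClosed_nonneg ψA).preimage (mk F).continuous)
    ((isClosed_nonneg ψB).preimage (mk F).continuous)
    ((isOpen_pos ψU).preimage (mk F).continuous) ((isOpen_pos ψV).preimage (mk F).continuous)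
    (preimage_mono hψAU) (preimage_mono fun z hz => (hψBV hz).1)
    (hA'V'.preimage _) (hB'U'.preimage _)
  obtain ⟨q, hq, p, hp, hqp⟩ := hc _ ψA.2 _ ψB.2 _ ψU.2 _ ψV.2 ⟨q, p, hqp⟩
  have hZ : IsCrookedPair {z | 0 ≤ coord F ψA z} {z | 0 ≤ coord F ψB z}
      {z | 0 < coord F ψU z} {z | 0 < coord F ψV z} (coord F ⟨q, hq⟩) (coord F ⟨p, hp⟩) :=
    IsCrookedPair.of_comp (mk_surjective F) hqp
  exact ⟨_, _, hZ.mono (fun a ha => show 0 ≤ coord F ψA a from (hAψA ha).le)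
    (fun b hb => show 0 ≤ coord F ψB b from (hBψB hb).le)
    (fun z (hz : 0 < coord F ψU z) => (hψUU hz.le).1)
    (fun z (hz : 0 < coord F ψV z) => hψVV hz.le)⟩

end FactorSpace

end

open Cardinal in
theorem exists_card_le_separatesPoints {X : Type u} [TopologicalSpace X] [CompactSpace X]
    [T2Space X] {κ : Cardinal.{u}} (hκ : ℵ₀ ≤ κ) {B : Set (Set X)}
    (hB : TopologicalSpace.IsTopologicalBasis B) (hBκ : #B ≤ κ) :
    ∃ Φ : Set C(X, ℝ), #Φ ≤ κ ∧ ∀ x x', (∀ φ ∈ Φ, φ x = φ x') → x = x' := by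
  have hU (UV : B × B) : ∃ φ : C(X, ℝ), Disjoint (closure UV.1.1) (closure UV.2.1) →
      EqOn φ 0 (closure UV.1.1) ∧ EqOn φ 1 (closure UV.2.1) := by
    by_cases h : Disjoint (closure UV.1.1) (closure UV.2.1)
    · obtain ⟨φ, h0, h1, -⟩ := exists_continuous_zero_one_of_isClosed isClosed_closure
        isClosed_closure h
      exact ⟨φ, fun _ => ⟨h0, h1⟩⟩
    · exact ⟨0, fun h' => absurd h' h⟩
  choose φ hφ using hU
  refine ⟨range φ, mk_range_le.trans ?_, fun x x' hxx' => by_contra fun hne => ?_⟩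
  · rw [mk_prod, lift_id]
    exact (mul_le_mul' hBκ hBκ).trans (mul_eq_self hκ).le
  obtain ⟨W, W', hW, hW', hxW, hxW', hWW'⟩ := t2_separation hne
  obtain ⟨U, hUB, hxU, hUW⟩ := hB.exists_closure_subset (hW.mem_nhds hxW)
  obtain ⟨V, hVB, hxV, hVW⟩ := hB.exists_closure_subset (hW'.mem_nhds hxW')
  obtain ⟨h0, h1⟩ := hφ (⟨U, hUB⟩, ⟨V, hVB⟩) (hWW'.mono hUW hVW)
  have := hxx' (φ (⟨U, hUB⟩, ⟨V, hVB⟩)) ⟨_, rfl⟩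
  rw [h0 (subset_closure hxU), h1 (subset_closure hxV)] at this
  exact zero_ne_one this

theorem WeaklyConfluent.of_comp {X Y Z : Type*} [TopologicalSpace X] [TopologicalSpace Y]
    [TopologicalSpace Z] [CompactSpace Y] [T2Space Z] {g : Y → Z} {h : Z → X}
    (hg : Continuous g) (hhg : WeaklyConfluent (h ∘ g)) : WeaklyConfluent h := by
  intro K hK hKc
  obtain ⟨L, hL, hLc, hLK⟩ := hhg K hK hKc
  exact ⟨g '' L, (hL.isCompact.image hg).isClosed, hLc.image g hg.continuousOn,
    by rw [← image_comp, hLK]⟩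

/-- (Factorization theorem, souped-up Mardešić) A continuous surjection `f : Y → X`
between compact Hausdorff spaces, where `X` has weight at most `κ`, factors as
`f = h ∘ g` through a compact Hausdorff space `Z` of weight at most `κ`; moreover
`Z` is hereditarily indecomposable if `Y` is, and `h` is weakly confluent if `f` is. -/
theorem mardesic_factorization
    (κ : Cardinal.{u}) (hκ : Cardinal.aleph0 ≤ κ)
    (X Y : Type u) [TopologicalSpace X] [TopologicalSpace Y]
    [CompactSpace X] [T2Space X] [CompactSpace Y] [T2Space Y]
    (f : Y → X) (hf : Continuous f) (hfs : Surjective f)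
    (hw : ∃ B : Set (Set X), TopologicalSpace.IsTopologicalBasis B ∧ Cardinal.mk B ≤ κ) :
    ∃ (Z : Type u) (tZ : TopologicalSpace Z),
      @CompactSpace Z tZ ∧ @T2Space Z tZ ∧
      (∃ B : Set (Set Z), @TopologicalSpace.IsTopologicalBasis Z tZ B ∧
        Cardinal.mk B ≤ κ) ∧
      ∃ (g : Y → Z) (h : Z → X),
        @Continuous Y Z _ tZ g ∧ Surjective g ∧
        @Continuous Z X tZ _ h ∧ Surjective h ∧
        f = h ∘ g ∧
        (HereditarilyIndecomposable Y → @HereditarilyIndecomposable Z tZ) ∧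
        (WeaklyConfluent f → @WeaklyConfluent Z X tZ _ h) := by
  obtain ⟨B, hB, hBκ⟩ := hw
  obtain ⟨Φ, hΦκ, hΦ⟩ := exists_card_le_separatesPoints hκ hB hBκ
  obtain ⟨F, hF₀, hFκ, hF, hc⟩ := exists_superset_isRationalLattice_reflectsCrookedPairs hκ
    (F₀ := (fun φ : C(X, ℝ) => φ.comp ⟨f, hf⟩) '' Φ) (Cardinal.mk_image_le.trans hΦκ)
  obtain ⟨h, hfh⟩ := FactorSpace.exists_comp_eq F ⟨f, hf⟩ fun y y' hyy' =>
    hΦ _ _ fun φ hφ => (FactorSpace.mk_eq_mk_iff F).mp hyy' _ (hF₀ ⟨φ, hφ, rfl⟩)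
  replace hfh : f = h ∘ FactorSpace.mk F := congrArg DFunLike.coe hfh.symm
  refine ⟨FactorSpace F, inferInstance, inferInstance, inferInstance,
    ⟨_, FactorSpace.isTopologicalBasis_coord_pos hF, Cardinal.mk_range_le.trans hFκ⟩,
    FactorSpace.mk F, h, (FactorSpace.mk F).continuous, FactorSpace.mk_surjective F,
    h.continuous, (hfh ▸ hfs).of_comp, hfh, fun hY => ?_,
    fun hwc => (hfh ▸ hwc).of_comp (FactorSpace.mk F).continuous⟩
  exact (FactorSpace.hasCrookedPairs hF hc hY.hasCrookedPairs).hereditarilyIndecomposable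
end

section
/- Let S : ℕ* → D* be a continuous surjection and let Σ be a map assigning to each X ∈ 𝔅 a subset Σ(X) of ℕ such that for every X ∈ 𝔅 the set (Σ(X))* equals S⁻¹[X*]. Then the restriction of Σ to 𝔅⁻ is not simple: there is no map σ : ℕ×ℕ → [ℕ]^{<ω} (finite subsets of ℕ) such that for every X ∈ 𝔅⁻ the symmetric difference of Σ(X) and σ[X] = ⋃_{x∈X} σ(x) is finite. -/
open Set Topology Function

noncomputable section

/-- The space `D = ℕ × (ℕ + 1)`, where `ℕ + 1` is the one-point compactification of
the discrete space `ℕ`. -/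
abbrev SpaceD : Type := ℕ × OnePoint ℕ

/-- The Čech–Stone remainder `ℕ* = βℕ ∖ ℕ` of the discrete space `ℕ`. -/
def NatStar : Set (StoneCech ℕ) :=
  (Set.range (stoneCechUnit : ℕ → StoneCech ℕ))ᶜ

/-- The Čech–Stone remainder `D* = βD ∖ D`. -/
def DStar : Set (StoneCech SpaceD) :=
  (Set.range (stoneCechUnit : SpaceD → StoneCech SpaceD))ᶜ

/-- For `A ⊆ ℕ`, the set `A* ⊆ ℕ*`: the closure of `A` in `βℕ` intersected with `ℕ*`. -/
def starN (A : Set ℕ) : Set ↥NatStar :=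
  {p | (p : StoneCech ℕ) ∈ closure (stoneCechUnit '' A)}

/-- The identification of `ℕ × ℕ` with a subset of `D`. -/
def intoD : ℕ × ℕ → SpaceD := fun p => (p.1, (p.2 : OnePoint ℕ))

/-- For `X ⊆ ℕ × ℕ ⊆ D`, the set `X* ⊆ D*`: the closure of `X` in `βD` intersected
with `D*`. -/
def starD (X : Set (ℕ × ℕ)) : Set ↥DStar :=
  {q | (q : StoneCech SpaceD) ∈ closure (stoneCechUnit '' (intoD '' X))}

/-- The family `𝔅`: subsets of `ℕ × ℕ` that almost contain or almost miss every
column `Cₙ = {n} × ℕ`; their closures in `D` are exactly the clopen subsets of `D`. -/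
def famB : Set (Set (ℕ × ℕ)) :=
  {X | ∀ n : ℕ, {m : ℕ | (n, m) ∉ X}.Finite ∨ {m : ℕ | (n, m) ∈ X}.Finite}

/-- The family `𝔅⁻ ⊆ 𝔅` of sets meeting every column in a finite set. -/
def famBminus : Set (Set (ℕ × ℕ)) :=
  {X ∈ famB | ∀ n : ℕ, {m : ℕ | (n, m) ∈ X}.Finite}

/-!
Stone–Čech duality turns the representation `(Σ X)* = S⁻¹[X*]` into almost-inclusions: for
`X, Y ∈ 𝔅`, `Σ X ⊆* Σ Y` iff `X* ⊆ Y*`, and `Σ X ∩ Σ Y` is finite when `X* ∩ Y* = ∅`. If `σ`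
were simple, disjoint column-finite sets would have almost disjoint `σ`-images, which forces the
values of `σ` on distinct columns beyond some `k` to be disjoint above `k`; and an infinite
column-finite `Z` disjoint from `X` would have `σ[Z] ⊈* σ[X]`, which makes `σ[Cₙ]` infinite for
almost every column. By the disjointness, for every set `A` of columns beyond `k`, almost every
`n ∈ A` satisfies `σ[Cₙ] ⊆* Σ(A × ℕ)`. Splitting the rich columns into infinitely many infinite
pieces yields `A`, `B` with `A ∩ B` finite and a rich column `n` with this property for both. But
finitely many columns are compact in `D`, so `(A × ℕ)* ∩ (B × ℕ)* = ∅` and `σ[Cₙ]` is finite.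
-/

open scoped symmDiff

theorem Set.Finite.diff_of_symmDiff {α : Type*} {P Q P' Q' : Set α} (h : (P \ Q).Finite)
    (hP : (P ∆ P').Finite) (hQ : (Q ∆ Q').Finite) : (P' \ Q').Finite :=
  (h.union (hP.union hQ)).subset fun a ↦ by simp only [mem_union, mem_sdiff, mem_symmDiff]; tauto

theorem Set.Finite.inter_of_symmDiff {α : Type*} {P Q P' Q' : Set α} (h : (P ∩ Q).Finite)
    (hP : (P ∆ P').Finite) (hQ : (Q ∆ Q').Finite) : (P' ∩ Q').Finite :=
  (h.union (hP.union hQ)).subset fun a ↦ by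
    simp only [mem_union, mem_inter_iff, mem_symmDiff]; tauto

theorem Set.Infinite.exists_pairwise_disjoint_infinite {α : Type*} {R : Set α}
    (hR : R.Infinite) :
    ∃ P : ℕ → Set α, (∀ i, P i ⊆ R) ∧ (∀ i, (P i).Infinite) ∧ Pairwise (Disjoint on P) := by
  set e := hR.natEmbedding
  have he : ∀ {i j i' j'}, (e (Nat.pair i j) : α) = e (Nat.pair i' j') → i = i' ∧ j = j' :=
    fun h ↦ Nat.pair_eq_pair.mp (e.injective (Subtype.ext h))
  refine ⟨fun i ↦ range fun j ↦ (e (Nat.pair i j) : α), ?_, fun i ↦ ?_, fun i i' hne ↦ ?_⟩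
  · rintro i _ ⟨j, rfl⟩
    exact (e _).2
  · exact infinite_range_of_injective fun j j' h ↦ (he h).2
  · rw [Function.onFun, disjoint_left]
    rintro _ ⟨j, rfl⟩ ⟨j', h⟩
    exact hne (he h).1.symm

theorem Set.Infinite.exists_finite_inter_and_mem_good {α : Type*} {R : Set α}
    (hR : R.Infinite) (good : Set α → α → Prop) (h : ∀ A ⊆ R, {n ∈ A | ¬ good A n}.Finite) :
    ∃ A ⊆ R, ∃ B ⊆ R, (A ∩ B).Finite ∧ ∃ n ∈ A ∩ B, good A n ∧ good B n := by
  have exists_good : ∀ A ⊆ R, A.Infinite → ∃ n ∈ A, good A n := fun A hAR hA ↦ by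
    obtain ⟨n, hn, hbad⟩ := (hA.sdiff (h A hAR)).nonempty
    exact ⟨n, hn, not_not.mp fun hg ↦ hbad ⟨hn, hg⟩⟩
  obtain ⟨P, hPR, hPinf, hPdisj⟩ := hR.exists_pairwise_disjoint_infinite
  choose c hcP hcG using fun i ↦ exists_good (P i) (hPR i) (hPinf i)
  have hc : ∀ {i j}, c j ∈ P i → j = i := fun {i j} h ↦
    not_not.mp fun hne ↦ disjoint_left.mp (hPdisj hne) (hcP j) h
  have hER : range c ⊆ R := range_subset_iff.mpr fun i ↦ hPR i (hcP i)
  obtain ⟨_, ⟨i, rfl⟩, hgood⟩ := exists_good (range c) hER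
    (infinite_range_of_injective fun i j hij ↦ hc (hij ▸ hcP j))
  refine ⟨P i, hPR i, range c, hER, (finite_singleton (c i)).subset ?_, c i,
    ⟨hcP i, mem_range_self i⟩, hcG i, hgood⟩
  rintro _ ⟨hn, j, rfl⟩
  rw [hc hn]
  rfl

section StoneCech

variable {α : Type*} [TopologicalSpace α]

theorem disjoint_closure_image_stoneCechUnit {U A B : Set α} (hU : IsClopen U) (hA : A ⊆ U)
    (hB : B ⊆ Uᶜ) :
    Disjoint (closure (stoneCechUnit '' A)) (closure (stoneCechUnit '' B)) := by
  set g := stoneCechExtend ((continuous_boolIndicator_iff_isClopen U).mpr hU)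
  have hg : Continuous g := continuous_stoneCechExtend _
  have key : ∀ (C : Set α) (b : Bool), (∀ a ∈ C, U.boolIndicator a = b) →
      closure (stoneCechUnit '' C) ⊆ g ⁻¹' {b} := by
    refine fun C b hC ↦ closure_minimal ?_ ((isClosed_discrete _).preimage hg)
    rintro _ ⟨a, ha, rfl⟩
    simp [g, stoneCechExtend_stoneCechUnit, hC a ha]
  refine Disjoint.mono (key A true fun a ha ↦ ?_) (key B false fun a ha ↦ ?_) ?_
  · exact (U.mem_iff_boolIndicator a).mp (hA ha)
  · exact (U.notMem_iff_boolIndicator a).mp (hB ha)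
  · exact (disjoint_singleton.mpr (by decide)).preimage g

theorem closure_image_stoneCechUnit_subset_range {A K : Set α} (hK : IsCompact K)
    (hA : A ⊆ K) : closure (stoneCechUnit '' A) ⊆ range stoneCechUnit :=
  ((hK.image continuous_stoneCechUnit).isClosed.closure_subset_iff.mpr (image_mono hA)).trans
    (image_subset_range _ _)

theorem exists_mem_closure_image_stoneCechUnit_notMem_range [CompletelyRegularSpace α]
    {A : Set α} (hAc : IsClosed A) (hAd : IsDiscrete A) (hA : A.Infinite) :
    ∃ p ∈ closure (stoneCechUnit '' A), p ∉ range stoneCechUnit := by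
  by_contra! h
  have hK : IsCompact (stoneCechUnit ⁻¹' closure (stoneCechUnit '' A)) :=
    isInducing_stoneCechUnit.isCompact_preimage' isClosed_closure.isCompact h
  have hAK : A ⊆ stoneCechUnit ⁻¹' closure (stoneCechUnit '' A) :=
    fun a ha ↦ subset_closure (mem_image_of_mem _ ha)
  exact hA ((hK.of_isClosed_subset hAc hAK).finite hAd)

end StoneCech

theorem starN_eq_empty_iff {A : Set ℕ} : starN A = ∅ ↔ A.Finite := by
  refine ⟨fun h ↦ ?_, fun hA ↦ eq_empty_of_forall_notMem fun p hp ↦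
    p.2 (closure_image_stoneCechUnit_subset_range hA.isCompact subset_rfl hp)⟩
  by_contra hA
  obtain ⟨p, hpA, hp⟩ := exists_mem_closure_image_stoneCechUnit_notMem_range
    (isClosed_discrete A) DiscreteTopology.isDiscrete hA
  exact eq_empty_iff_forall_notMem.mp h ⟨p, hp⟩ hpA

theorem starN_mono {A B : Set ℕ} (h : A ⊆ B) : starN A ⊆ starN B :=
  fun _ hp ↦ closure_mono (image_mono h) hp

theorem starN_diff (A B : Set ℕ) : starN (A \ B) = starN A \ starN B := by
  refine subset_antisymm (subset_sdiff.mpr ⟨starN_mono sdiff_subset, ?_⟩) fun p ⟨hpA, hpB⟩ ↦ ?_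
  · exact (disjoint_closure_image_stoneCechUnit (isClopen_discrete B) subset_rfl
      (fun _ h ↦ h.2)).symm.preimage _
  · have hp : (p : StoneCech ℕ) ∈ closure (stoneCechUnit '' (A \ B ∪ B)) :=
      closure_mono (image_mono (by simp)) hpA
    rw [image_union, closure_union] at hp
    exact hp.resolve_right hpB

theorem starN_inter (A B : Set ℕ) : starN (A ∩ B) = starN A ∩ starN B := by
  rw [← sdiff_sdiff_right_self, starN_diff, starN_diff, sdiff_sdiff_right_self]

theorem diff_finite_iff_starN_subset {A B : Set ℕ} : (A \ B).Finite ↔ starN A ⊆ starN B := by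
  rw [← starN_eq_empty_iff, starN_diff, sdiff_eq_empty]

theorem mem_famBminus_iff {X : Set (ℕ × ℕ)} :
    X ∈ famBminus ↔ ∀ n : ℕ, {m : ℕ | (n, m) ∈ X}.Finite :=
  ⟨fun h ↦ h.2, fun h ↦ ⟨fun n ↦ Or.inr (h n), h⟩⟩

theorem famBminus_subset_famB : famBminus ⊆ famB := fun _ h ↦ h.1

theorem image_mem_famBminus {ι : Type*} {f : ι → ℕ × ℕ} {s : Set ι}
    (hf : InjOn (Prod.fst ∘ f) s) : f '' s ∈ famBminus := by
  refine mem_famBminus_iff.mpr fun n ↦ Set.Subsingleton.finite ?_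
  rintro m ⟨i, hi, hfi⟩ m' ⟨j, hj, hfj⟩
  obtain rfl : i = j := hf hi hj (by simp [hfi, hfj])
  exact (Prod.mk.inj (hfi.symm.trans hfj)).2

theorem range_mem_famBminus {ι : Type*} {f : ι → ℕ × ℕ} (hf : Injective (Prod.fst ∘ f)) :
    range f ∈ famBminus :=
  image_univ (f := f) ▸ image_mem_famBminus hf.injOn

theorem prod_univ_mem_famB (A : Set ℕ) : A ×ˢ (univ : Set ℕ) ∈ famB := by
  intro n
  by_cases hn : n ∈ A <;> simp [hn]

theorem isOpenEmbedding_intoD : IsOpenEmbedding intoD :=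
  IsOpenEmbedding.id.prodMap OnePoint.isOpenEmbedding_coe

theorem isClosed_image_intoD {X : Set (ℕ × ℕ)} (hX : X ∈ famBminus) : IsClosed (intoD '' X) := by
  have h : (intoD '' X)ᶜ = ⋃ n, {n} ×ˢ (((↑) : ℕ → OnePoint ℕ) '' {m | (n, m) ∈ X})ᶜ := by
    ext ⟨n, y⟩
    simp [intoD]
  rw [← isOpen_compl_iff, h]
  exact isOpen_iUnion fun n ↦
    (isOpen_discrete _).prod ((mem_famBminus_iff.mp hX n).image _).isClosed.isOpen_compl

theorem starD_mono {X Y : Set (ℕ × ℕ)} (h : X ⊆ Y) : starD X ⊆ starD Y :=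
  fun _ hq ↦ closure_mono (image_mono (image_mono h)) hq

theorem starD_union (X Y : Set (ℕ × ℕ)) : starD (X ∪ Y) = starD X ∪ starD Y := by
  ext q
  simp [starD, image_union, closure_union]

theorem starD_eq_empty_of_subset_prod {A : Set ℕ} (hA : A.Finite) {X : Set (ℕ × ℕ)}
    (hX : X ⊆ A ×ˢ univ) : starD X = ∅ := by
  refine eq_empty_of_forall_notMem fun q hq ↦ q.2 ?_
  refine closure_image_stoneCechUnit_subset_range (hA.isCompact.prod isCompact_univ) ?_ hq
  rintro _ ⟨x, hx, rfl⟩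
  exact ⟨(hX hx).1, mem_univ _⟩

theorem starD_nonempty {X : Set (ℕ × ℕ)} (hX : X ∈ famBminus) (hinf : X.Infinite) :
    (starD X).Nonempty := by
  obtain ⟨p, hpX, hp⟩ := exists_mem_closure_image_stoneCechUnit_notMem_range
    (isClosed_image_intoD hX) (DiscreteTopology.isDiscrete.image isOpenEmbedding_intoD.isInducing)
    (hinf.image isOpenEmbedding_intoD.injective.injOn)
  exact ⟨⟨p, hp⟩, hpX⟩

theorem disjoint_starD {X Y : Set (ℕ × ℕ)} (hX : X ∈ famBminus) (h : Disjoint X Y) :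
    Disjoint (starD X) (starD Y) :=
  (disjoint_closure_image_stoneCechUnit
    ⟨isClosed_image_intoD hX, isOpenEmbedding_intoD.isOpenMap _ (isOpen_discrete X)⟩ subset_rfl
    (subset_compl_iff_disjoint_right.mpr
      ((disjoint_image_iff isOpenEmbedding_intoD.injective).mpr h.symm))).preimage _

theorem disjoint_starD_prod_univ {A B : Set ℕ} (h : (A ∩ B).Finite) :
    Disjoint (starD (A ×ˢ univ)) (starD (B ×ˢ univ)) := by
  rw [← sdiff_union_inter A B, union_prod, starD_union,
    starD_eq_empty_of_subset_prod h subset_rfl, union_empty]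
  refine (disjoint_closure_image_stoneCechUnit (U := (A \ B) ×ˢ univ)
    ((isClopen_discrete _).prod isClopen_univ) ?_ ?_).preimage _
  · rintro _ ⟨x, hx, rfl⟩
    exact ⟨hx.1, mem_univ _⟩
  · rintro _ ⟨x, hx, rfl⟩ hx'
    exact hx'.1.2 hx.1

section SimpleRepresentation

variable {S : ↥NatStar → ↥DStar} {Sig : Set (ℕ × ℕ) → Set ℕ} {σ : ℕ × ℕ → Finset ℕ}

theorem diff_finite_iff_starD_subset (hSs : Surjective S)
    (hSig : ∀ X ∈ famB, starN (Sig X) = S ⁻¹' starD X) {X Y : Set (ℕ × ℕ)} (hX : X ∈ famB)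
    (hY : Y ∈ famB) : (Sig X \ Sig Y).Finite ↔ starD X ⊆ starD Y := by
  rw [diff_finite_iff_starN_subset, hSig X hX, hSig Y hY, hSs.preimage_subset_preimage_iff]

theorem inter_finite_of_disjoint_starD (hSig : ∀ X ∈ famB, starN (Sig X) = S ⁻¹' starD X)
    {X Y : Set (ℕ × ℕ)} (hX : X ∈ famB) (hY : Y ∈ famB) (h : Disjoint (starD X) (starD Y)) :
    (Sig X ∩ Sig Y).Finite := by
  rw [← starN_eq_empty_iff, starN_inter, hSig X hX, hSig Y hY, ← preimage_inter, h.inter_eq,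
    preimage_empty]

theorem finite_inter_biUnion_of_disjoint (hSig : ∀ X ∈ famB, starN (Sig X) = S ⁻¹' starD X)
    (hσ : ∀ X ∈ famBminus, (Sig X ∆ ⋃ x ∈ X, (σ x : Set ℕ)).Finite) {X Y : Set (ℕ × ℕ)}
    (hX : X ∈ famBminus) (hY : Y ∈ famBminus) (h : Disjoint X Y) :
    ((⋃ x ∈ X, (σ x : Set ℕ)) ∩ ⋃ y ∈ Y, (σ y : Set ℕ)).Finite :=
  (inter_finite_of_disjoint_starD hSig (famBminus_subset_famB hX) (famBminus_subset_famB hY)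
    (disjoint_starD hX h)).inter_of_symmDiff (hσ X hX) (hσ Y hY)

theorem infinite_biUnion_diff_of_disjoint (hSs : Surjective S)
    (hSig : ∀ X ∈ famB, starN (Sig X) = S ⁻¹' starD X)
    (hσ : ∀ X ∈ famBminus, (Sig X ∆ ⋃ x ∈ X, (σ x : Set ℕ)).Finite) {Z X : Set (ℕ × ℕ)}
    (hZ : Z ∈ famBminus) (hX : X ∈ famBminus) (h : Disjoint Z X) (hinf : Z.Infinite) :
    ((⋃ z ∈ Z, (σ z : Set ℕ)) \ ⋃ x ∈ X, (σ x : Set ℕ)).Infinite := by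
  intro hfin
  obtain ⟨q, hq⟩ := starD_nonempty hZ hinf
  have hsub : starD Z ⊆ starD X := by
    rw [← diff_finite_iff_starD_subset hSs hSig (famBminus_subset_famB hZ)
      (famBminus_subset_famB hX)]
    exact hfin.diff_of_symmDiff (symmDiff_comm (Sig Z) _ ▸ hσ Z hZ)
      (symmDiff_comm (Sig X) _ ▸ hσ X hX)
  exact disjoint_left.mp (disjoint_starD hZ h) hq (hsub hq)

theorem exists_disjoint_infinite_inter_biUnion
    (H : ∀ k, ∃ x y : ℕ × ℕ, k ≤ x.1 ∧ k ≤ y.1 ∧ x.1 ≠ y.1 ∧ ∃ a, k ≤ a ∧ a ∈ σ x ∧ a ∈ σ y) :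
    ∃ X ∈ famBminus, ∃ Y ∈ famBminus, Disjoint X Y ∧
      ((⋃ x ∈ X, (σ x : Set ℕ)) ∩ ⋃ y ∈ Y, (σ y : Set ℕ)).Infinite := by
  choose x y hx hy hxy a ha hax hay using H
  set hi : ℕ → ℕ := fun k ↦ max (x k).1 (max (y k).1 (a k))
  obtain ⟨u, -, hu⟩ := exists_seq_of_forall_finset_exists (fun _ ↦ True) (fun k k' ↦ hi k < k')
    fun s _ ↦ ⟨s.sup hi + 1, trivial, fun k hk ↦ Nat.lt_succ_of_le (Finset.le_sup hk)⟩
  have sep : ∀ {f g : ℕ → ℕ}, (∀ k, f k ≤ hi k) → (∀ k, k ≤ g k) →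
      ∀ {i j}, i < j → f (u i) < g (u j) :=
    fun hf hg _ _ hij ↦ (hf _).trans_lt ((hu _ _ hij).trans_le (hg _))
  have hx_le : ∀ k, (x k).1 ≤ hi k := fun k ↦ le_max_left _ _
  have hy_le : ∀ k, (y k).1 ≤ hi k := fun k ↦ (le_max_left _ _).trans (le_max_right _ _)
  have ha_le : ∀ k, a k ≤ hi k := fun k ↦ (le_max_right _ _).trans (le_max_right _ _)
  have hcol : ∀ i j, (x (u i)).1 ≠ (y (u j)).1 := by
    intro i j
    rcases lt_trichotomy i j with hij | rfl | hij
    · exact (sep hx_le hy hij).ne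
    · exact hxy _
    · exact (sep hy_le hx hij).ne'
  refine ⟨range (x ∘ u), range_mem_famBminus (StrictMono.injective fun _ _ ↦ sep hx_le hx),
    range (y ∘ u), range_mem_famBminus (StrictMono.injective fun _ _ ↦ sep hy_le hy), ?_, ?_⟩
  · rw [disjoint_left]
    rintro _ ⟨i, rfl⟩ ⟨j, hj⟩
    exact hcol i j (congrArg Prod.fst hj).symm
  · refine Set.Infinite.mono ?_ (infinite_range_of_injective
      (StrictMono.injective fun _ _ ↦ sep ha_le ha : Injective (a ∘ u)))
    rintro _ ⟨i, rfl⟩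
    exact ⟨mem_biUnion (mem_range_self i) (hax _), mem_biUnion (mem_range_self i) (hay _)⟩

def columnUnion (σ : ℕ × ℕ → Finset ℕ) (n : ℕ) : Set ℕ := ⋃ m, (σ (n, m) : Set ℕ)

theorem exists_columnUnion_subset_biUnion_le {n : ℕ} (h : (columnUnion σ n).Finite) :
    ∃ g, columnUnion σ n ⊆ ⋃ m ≤ g, (σ (n, m) : Set ℕ) := by
  obtain ⟨I, hI, hsub⟩ := finite_subset_iUnion h subset_rfl
  obtain ⟨g, hg⟩ := hI.bddAbove
  exact ⟨g, hsub.trans (biUnion_mono (fun m hm ↦ hg hm) fun _ _ ↦ subset_rfl)⟩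

theorem finite_setOf_columnUnion_finite (hSs : Surjective S)
    (hSig : ∀ X ∈ famB, starN (Sig X) = S ⁻¹' starD X)
    (hσ : ∀ X ∈ famBminus, (Sig X ∆ ⋃ x ∈ X, (σ x : Set ℕ)).Finite) :
    {n | (columnUnion σ n).Finite}.Finite := by
  set E := {n | (columnUnion σ n).Finite}
  refine Set.not_infinite.mp fun hE ↦ ?_
  choose! g hg using fun n (hn : n ∈ E) ↦ exists_columnUnion_subset_biUnion_le hn
  set X := {x : ℕ × ℕ | x.1 ∈ E ∧ x.2 ≤ g x.1}
  set Z := (fun n ↦ (n, g n + 1)) '' E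
  have hX : X ∈ famBminus :=
    mem_famBminus_iff.mpr fun n ↦ (finite_le_nat (g n)).subset fun _ hm ↦ hm.2
  have hZ : Z ∈ famBminus := image_mem_famBminus fun _ _ _ _ h ↦ h
  have hZX : Disjoint Z X := by
    rw [disjoint_left]
    rintro _ ⟨n, -, rfl⟩ ⟨-, h⟩
    exact Nat.not_succ_le_self _ h
  have hsub : (⋃ z ∈ Z, (σ z : Set ℕ)) ⊆ ⋃ x ∈ X, (σ x : Set ℕ) := by
    simp only [Z, biUnion_image, iUnion_subset_iff]
    intro n hn a ha
    obtain ⟨m, hm, ham⟩ := mem_iUnion₂.mp (hg n hn (mem_iUnion.mpr ⟨_, ha⟩))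
    exact mem_iUnion₂.mpr ⟨(n, m), ⟨hn, hm⟩, ham⟩
  refine infinite_biUnion_diff_of_disjoint hSs hSig hσ hZ hX hZX ?_ ?_
  · exact hE.image fun _ _ _ _ h ↦ congrArg Prod.fst h
  · rw [sdiff_eq_empty.mpr hsub]
    exact finite_empty

theorem exists_columns_disjoint_above (hSig : ∀ X ∈ famB, starN (Sig X) = S ⁻¹' starD X)
    (hσ : ∀ X ∈ famBminus, (Sig X ∆ ⋃ x ∈ X, (σ x : Set ℕ)).Finite) :
    ∃ k, ∀ x y : ℕ × ℕ, k ≤ x.1 → k ≤ y.1 → x.1 ≠ y.1 → ∀ a, k ≤ a → a ∈ σ x → a ∉ σ y := by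
  by_contra! H
  obtain ⟨X, hX, Y, hY, hXY, hinf⟩ := exists_disjoint_infinite_inter_biUnion H
  exact hinf (finite_inter_biUnion_of_disjoint hSig hσ hX hY hXY)

theorem finite_setOf_columnUnion_diff_infinite
    (hSig : ∀ X ∈ famB, starN (Sig X) = S ⁻¹' starD X)
    (hσ : ∀ X ∈ famBminus, (Sig X ∆ ⋃ x ∈ X, (σ x : Set ℕ)).Finite) {k : ℕ}
    (hk : ∀ x y : ℕ × ℕ, k ≤ x.1 → k ≤ y.1 → x.1 ≠ y.1 → ∀ a, k ≤ a → a ∈ σ x → a ∉ σ y)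
    {A : Set ℕ} (hA : ∀ n ∈ A, k ≤ n) :
    {n ∈ A | (columnUnion σ n \ Sig (A ×ˢ univ)).Infinite}.Finite := by
  set B := {n ∈ A | (columnUnion σ n \ Sig (A ×ˢ univ)).Infinite}
  have hwit : ∀ n ∈ B, ∃ m a, k ≤ a ∧ a ∈ σ (n, m) ∧ a ∉ Sig (A ×ˢ univ) := by
    intro n hn
    obtain ⟨a, ⟨ha, haA⟩, hka⟩ := hn.2.exists_gt k
    obtain ⟨m, hm⟩ := mem_iUnion.mp ha
    exact ⟨m, a, hka.le, hm, haA⟩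
  choose! m a hka ham haA using hwit
  set X := (fun n ↦ (n, m n)) '' B
  have hX : X ∈ famBminus := image_mem_famBminus fun _ _ _ _ h ↦ h
  have hXA : X ⊆ A ×ˢ univ := by
    rintro _ ⟨n, hn, rfl⟩
    exact ⟨hn.1, mem_univ _⟩
  have hSigX : (Sig X \ Sig (A ×ˢ univ)).Finite := by
    rw [diff_finite_iff_starN_subset, hSig X (famBminus_subset_famB hX),
      hSig _ (prod_univ_mem_famB A)]
    exact preimage_mono (starD_mono hXA)
  have hfin : ((⋃ x ∈ X, (σ x : Set ℕ)) \ Sig (A ×ˢ univ)).Finite :=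
    hSigX.diff_of_symmDiff (hσ X hX) (by simp)
  refine Finite.of_finite_image (f := a) (hfin.subset ?_) fun n hn n' hn' h ↦ ?_
  · rintro _ ⟨n, hn, rfl⟩
    exact ⟨mem_biUnion (mem_image_of_mem _ hn) (ham n hn), haA n hn⟩
  · by_contra hne
    exact hk (n, m n) (n', m n') (hA n hn.1) (hA n' hn'.1) hne (a n) (hka n hn) (ham n hn)
      (h ▸ ham n' hn')

theorem columnUnion_finite_of_inter_finite (hSig : ∀ X ∈ famB, starN (Sig X) = S ⁻¹' starD X)
    {A B : Set ℕ} (hAB : (A ∩ B).Finite) {n : ℕ}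
    (hA : (columnUnion σ n \ Sig (A ×ˢ univ)).Finite)
    (hB : (columnUnion σ n \ Sig (B ×ˢ univ)).Finite) : (columnUnion σ n).Finite := by
  have hSigAB := inter_finite_of_disjoint_starD hSig (prod_univ_mem_famB A) (prod_univ_mem_famB B)
    (disjoint_starD_prod_univ hAB)
  refine ((hA.union hB).union hSigAB).subset fun c hc ↦ ?_
  simp only [mem_union, mem_sdiff, mem_inter_iff]
  tauto

end SimpleRepresentation

theorem representing_map_is_not_simple_general
    (S : ↥NatStar → ↥DStar) (hSs : Surjective S)
    (Sig : Set (ℕ × ℕ) → Set ℕ)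
    (hSig : ∀ X ∈ famB, starN (Sig X) = S ⁻¹' (starD X)) :
    ¬ ∃ σ : ℕ × ℕ → Finset ℕ,
        ∀ X ∈ famBminus,
          (symmDiff (Sig X) (⋃ x ∈ X, (σ x : Set ℕ))).Finite := by
  rintro ⟨σ, hσ⟩
  obtain ⟨k, hk⟩ := exists_columns_disjoint_above hSig hσ
  have hR : {n | k ≤ n ∧ (columnUnion σ n).Infinite}.Infinite :=
    ((Set.Ici_infinite k).sdiff (finite_setOf_columnUnion_finite hSs hSig hσ)).mono fun _ ↦ id
  obtain ⟨A, hAR, B, -, hAB, n, hn, hnA, hnB⟩ := hR.exists_finite_inter_and_mem_good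
    (fun A n ↦ (columnUnion σ n \ Sig (A ×ˢ univ)).Finite)
    fun A hA ↦ finite_setOf_columnUnion_diff_infinite hSig hσ hk fun n hn ↦ (hA hn).1
  exact (hAR hn.1).2 (columnUnion_finite_of_inter_finite hSig hAB hnA hnB)

/-- If `S : ℕ* → D*` is a continuous surjection and `Σ` represents `S` on `𝔅`
(i.e. `(Σ X)* = S⁻¹[X*]` for all `X ∈ 𝔅`), then `Σ` restricted to `𝔅⁻` is not simple:
there is no `σ : ℕ × ℕ → [ℕ]^{<ω}` with `Σ X =* ⋃_{x ∈ X} σ x` for all `X ∈ 𝔅⁻`. -/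
theorem representing_map_is_not_simple
    (S : ↥NatStar → ↥DStar) (hSc : Continuous S) (hSs : Surjective S)
    (Sig : Set (ℕ × ℕ) → Set ℕ)
    (hSig : ∀ X ∈ famB, starN (Sig X) = S ⁻¹' (starD X)) :
    ¬ ∃ σ : ℕ × ℕ → Finset ℕ,
        ∀ X ∈ famBminus,
          (symmDiff (Sig X) (⋃ x ∈ X, (σ x : Set ℕ))).Finite :=
  representing_map_is_not_simple_general S hSs Sig hSig
end
end

section
/- Let Φ be an exact lifting of a Boolean algebra embedding of the measure algebra into 𝒫(ℕ)/fin, i.e., a map Φ from the Borel subsets of C = ℕ × 2^ℕ to subsets of ℕ such that: (i) if the symmetric difference A Δ B is μ-null then Φ(A) Δ Φ(B) is finite; (ii) Φ(A ∪ B) Δ (Φ(A) ∪ Φ(B)) is finite and Φ(C ∖ A) Δ (ℕ ∖ Φ(A)) is finite, for all Borel A, B; (iii) Φ(A) is finite if and only if μ(A) = 0; and (exactness) the sets Φ({n}×2^ℕ), n ∈ ℕ, form a partition of ℕ, and for every n and every finite binary sequence s, Φ({n}×[s]) is the disjoint union of Φ({n}×[s⌢0]) and Φ({n}×[s⌢1]).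 Then Φ is not complete: there is a sequence ⟨tₙ : n ∈ ℕ⟩ of finite binary sequences such that, for the open set O = ⋃ₙ {n}×[tₙ], the symmetric difference of Φ(O) and ⋃ₙ Φ({n}×[tₙ]) is infinite. -/
/-!
Exactness lets every `k ∈ Φ({n} × 2^ℕ)` be followed down the splitting tree to a sequence `s n k`
of length `k + 2` with `k ∈ Φ({n} × [s n k])`. Then `Uₙ = ⋃ₖ [s n k]` has measure at most `1/2`, so
`F = ⋃ₙ {n} × Uₙᶜ` has positive measure in every column and `Φ(F)` meets every `Φ({n} × 2^ℕ)`, say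
in `kₙ`. Take `tₙ = s n kₙ`: the open set `O` is disjoint from `F`, so `Φ(O) ∩ Φ(F)` is finite,
while the distinct points `kₙ` lie in `Φ(F) ∩ Φ({n} × [tₙ])`; hence all but finitely many of them
lie in `⋃ₙ Φ({n} × [tₙ]) \ Φ(O)`.
-/

open Set Function MeasureTheory

noncomputable section

/-- The space `C = ℕ × 2^ℕ`. -/
abbrev SpaceC : Type := ℕ × (ℕ → Bool)

/-- The basic clopen subset `[s] = {x ∈ 2^ℕ : s ⊂ x}` of the Cantor space determined by
a finite binary sequence `s`. -/
def cyl (s : List Bool) : Set (ℕ → Bool) :=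
  {x | ∀ i : Fin s.length, x i = s.get i}

section LiftingModFinite

variable {α β : Type*} [MeasurableSpace α] {Φ : Set α → Set β} {A B : Set α}

theorem diff_finite_of_subset
    (hunion : ∀ A B : Set α, MeasurableSet A → MeasurableSet B →
      (symmDiff (Φ (A ∪ B)) (Φ A ∪ Φ B)).Finite)
    (hA : MeasurableSet A) (hB : MeasurableSet B) (hAB : A ⊆ B) : (Φ A \ Φ B).Finite := by
  refine (hunion A B hA hB).subset ?_
  rw [union_eq_self_of_subset_left hAB]
  rintro x ⟨hxA, hxB⟩
  exact Or.inr ⟨Or.inl hxA, hxB⟩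

theorem inter_finite_of_disjoint
    (hunion : ∀ A B : Set α, MeasurableSet A → MeasurableSet B →
      (symmDiff (Φ (A ∪ B)) (Φ A ∪ Φ B)).Finite)
    (hcompl : ∀ A : Set α, MeasurableSet A → (symmDiff (Φ Aᶜ) ((Φ A)ᶜ)).Finite)
    (hA : MeasurableSet A) (hB : MeasurableSet B) (hAB : Disjoint A B) :
    (Φ A ∩ Φ B).Finite := by
  refine ((diff_finite_of_subset hunion hA hB.compl hAB.subset_compl_right).union
    (hcompl B hB)).subset ?_
  rintro x ⟨hxA, hxB⟩
  by_cases hx : x ∈ Φ Bᶜ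
  · exact Or.inr (Or.inl ⟨hx, not_not_intro hxB⟩)
  · exact Or.inl ⟨hxA, hx⟩

theorem infinite_inter_of_subset
    (hunion : ∀ A B : Set α, MeasurableSet A → MeasurableSet B →
      (symmDiff (Φ (A ∪ B)) (Φ A ∪ Φ B)).Finite)
    {C : Set α} (hA : MeasurableSet A) (hB : MeasurableSet B) (hC : MeasurableSet C)
    (hAB : A ⊆ B) (hAC : A ⊆ C) (hinf : (Φ A).Infinite) : (Φ B ∩ Φ C).Infinite := by
  refine fun hfin => hinf <| (hfin.union ((diff_finite_of_subset hunion hA hB hAB).union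
    (diff_finite_of_subset hunion hA hC hAC))).subset ?_
  intro x hx
  by_cases hxB : x ∈ Φ B <;> by_cases hxC : x ∈ Φ C
  · exact Or.inl ⟨hxB, hxC⟩
  · exact Or.inr (Or.inr ⟨hx, hxC⟩)
  all_goals exact Or.inr (Or.inl ⟨hx, hxB⟩)

end LiftingModFinite

theorem infinite_symmDiff_iUnion {β : Type*} {P Q : Set β} {Y : ℕ → Set β} {k : ℕ → β}
    (hk : Injective k) (hkP : ∀ n, k n ∈ P) (hkY : ∀ n, k n ∈ Y n) (hPQ : (P ∩ Q).Finite) :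
    (symmDiff Q (⋃ n, Y n)).Infinite := by
  refine fun hfin => infinite_range_of_injective hk ((hPQ.union hfin).subset ?_)
  rintro _ ⟨n, rfl⟩
  by_cases hQ : k n ∈ Q
  · exact Or.inl ⟨hkP n, hQ⟩
  · exact Or.inr (Or.inr ⟨mem_iUnion.mpr ⟨n, hkY n⟩, hQ⟩)

theorem disjoint_iUnion_prod_compl {γ : Type*} {U V : ℕ → Set γ} (hVU : ∀ n, V n ⊆ U n) :
    Disjoint (⋃ n, ({n} : Set ℕ) ×ˢ (U n)ᶜ) (⋃ n, ({n} : Set ℕ) ×ˢ V n) := by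
  simp_rw [disjoint_iUnion_left, disjoint_iUnion_right, disjoint_prod]
  intro n m
  obtain rfl | hnm := eq_or_ne n m
  · exact Or.inr (disjoint_compl_left.mono_right (hVU n))
  · exact Or.inl (disjoint_singleton.2 hnm)

theorem exists_length_eq_mem_of_split {β : Type*} {P : List Bool → Set β}
    (hsplit : ∀ s, P s ⊆ P (s ++ [false]) ∪ P (s ++ [true])) {k : β} (hk : k ∈ P []) (m : ℕ) :
    ∃ s : List Bool, s.length = m ∧ k ∈ P s := by
  induction m with
  | zero => exact ⟨[], rfl, hk⟩
  | succ m ih =>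
    obtain ⟨s, rfl, hks⟩ := ih
    rcases hsplit s hks with h | h
    · exact ⟨s ++ [false], by simp, h⟩
    · exact ⟨s ++ [true], by simp, h⟩

@[simp]
theorem cyl_nil : cyl [] = univ :=
  eq_univ_of_forall fun _ i => i.elim0

theorem measurableSet_cyl (s : List Bool) : MeasurableSet (cyl s) := by
  have : cyl s = ⋂ i : Fin s.length, (fun x : ℕ → Bool => x i) ⁻¹' {s.get i} := by
    ext x; simp [cyl]
  rw [this]
  exact .iInter fun i => measurable_pi_apply (i : ℕ) (measurableSet_singleton _)

theorem ENNReal.tsum_inv_two_pow_add_two : ∑' k : ℕ, (2 : ENNReal)⁻¹ ^ (k + 2) = 2⁻¹ := by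
  simp_rw [pow_add, ENNReal.tsum_mul_right, ENNReal.tsum_geometric, ENNReal.one_sub_inv_two,
    inv_inv, pow_two, ← mul_assoc, ENNReal.mul_inv_cancel two_ne_zero ENNReal.ofNat_ne_top, one_mul]

section Columns

variable {μ : Measure SpaceC}
  (hμ : ∀ (n : ℕ) (s : List Bool), μ (({n} : Set ℕ) ×ˢ cyl s) = (2 : ENNReal)⁻¹ ^ s.length)
include hμ

theorem measure_prod_iUnion_cyl_le {t : ℕ → List Bool} (ht : ∀ k, (t k).length = k + 2) (n : ℕ) :
    μ (({n} : Set ℕ) ×ˢ ⋃ k, cyl (t k)) ≤ 2⁻¹ :=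
  calc μ (({n} : Set ℕ) ×ˢ ⋃ k, cyl (t k))
      = μ (⋃ k, ({n} : Set ℕ) ×ˢ cyl (t k)) := by rw [prod_iUnion]
    _ ≤ ∑' k, μ (({n} : Set ℕ) ×ˢ cyl (t k)) := measure_iUnion_le _
    _ = 2⁻¹ := by simp_rw [hμ, ht, ENNReal.tsum_inv_two_pow_add_two]

theorem measure_prod_compl_iUnion_cyl_ne_zero {t : ℕ → List Bool}
    (ht : ∀ k, (t k).length = k + 2) (n : ℕ) :
    μ (({n} : Set ℕ) ×ˢ (⋃ k, cyl (t k))ᶜ) ≠ 0 := by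
  intro h
  have hle : ({n} : Set ℕ) ×ˢ univ ≤ᵐ[μ] ({n} : Set ℕ) ×ˢ ⋃ k, cyl (t k) := by
    rwa [ae_le_set, prod_sdiff_prod, sdiff_self, empty_prod, union_empty, ← compl_eq_univ_sdiff]
  have := (measure_mono_ae hle).trans (measure_prod_iUnion_cyl_le hμ ht n)
  rw [← cyl_nil, hμ, List.length_nil, pow_zero] at this
  exact absurd this (not_le.mpr (ENNReal.inv_lt_one.2 (by norm_num)))

end Columns

theorem exact_lifting_is_not_complete_general
    (μ : Measure SpaceC)
    (hμ : ∀ (n : ℕ) (s : List Bool),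
      μ (({n} : Set ℕ) ×ˢ cyl s) = (2 : ENNReal)⁻¹ ^ s.length)
    (Φ : Set SpaceC → Set ℕ)
    (hunion : ∀ A B : Set SpaceC, MeasurableSet A → MeasurableSet B →
      (symmDiff (Φ (A ∪ B)) (Φ A ∪ Φ B)).Finite)
    (hcompl : ∀ A : Set SpaceC, MeasurableSet A →
      (symmDiff (Φ Aᶜ) ((Φ A)ᶜ)).Finite)
    (hfin : ∀ A : Set SpaceC, MeasurableSet A → ((Φ A).Finite ↔ μ A = 0))
    (hpart_disj : Pairwise fun n m : ℕ =>
      Disjoint (Φ (({n} : Set ℕ) ×ˢ (Set.univ : Set (ℕ → Bool))))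
               (Φ (({m} : Set ℕ) ×ˢ (Set.univ : Set (ℕ → Bool)))))
    (hexact : ∀ (n : ℕ) (s : List Bool),
      Φ (({n} : Set ℕ) ×ˢ cyl s)
        = Φ (({n} : Set ℕ) ×ˢ cyl (s ++ [false])) ∪ Φ (({n} : Set ℕ) ×ˢ cyl (s ++ [true])) ∧
      Disjoint (Φ (({n} : Set ℕ) ×ˢ cyl (s ++ [false])))
               (Φ (({n} : Set ℕ) ×ˢ cyl (s ++ [true])))) :
    ∃ t : ℕ → List Bool,
      (symmDiff (Φ (⋃ n : ℕ, ({n} : Set ℕ) ×ˢ cyl (t n)))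
                (⋃ n : ℕ, Φ (({n} : Set ℕ) ×ˢ cyl (t n)))).Infinite := by
  have hbranch (n k : ℕ) : ∃ s : List Bool, s.length = k + 2 ∧
      (k ∈ Φ (({n} : Set ℕ) ×ˢ univ) → k ∈ Φ (({n} : Set ℕ) ×ˢ cyl s)) := by
    by_cases hk : k ∈ Φ (({n} : Set ℕ) ×ˢ univ)
    · rw [← cyl_nil] at hk
      obtain ⟨s, hs, hks⟩ := exists_length_eq_mem_of_split
        (fun s => (hexact n s).1.subset) hk (k + 2)
      exact ⟨s, hs, fun _ => hks⟩
    · exact ⟨List.replicate (k + 2) false, List.length_replicate, fun h => absurd h hk⟩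
  choose s hs_len hs_mem using hbranch
  have hcol (n : ℕ) : MeasurableSet (({n} : Set ℕ) ×ˢ (univ : Set (ℕ → Bool))) :=
    (measurableSet_singleton n).prod .univ
  have hFₙ (n : ℕ) : MeasurableSet (({n} : Set ℕ) ×ˢ (⋃ k, cyl (s n k))ᶜ) :=
    (measurableSet_singleton n).prod (.compl (.iUnion fun k => measurableSet_cyl _))
  have hF : MeasurableSet (⋃ n, ({n} : Set ℕ) ×ˢ (⋃ k, cyl (s n k))ᶜ) := .iUnion hFₙ
  have hmeet (n : ℕ) : ∃ k, k ∈ Φ (⋃ n, ({n} : Set ℕ) ×ˢ (⋃ k, cyl (s n k))ᶜ) ∧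
      k ∈ Φ (({n} : Set ℕ) ×ˢ univ) :=
    (infinite_inter_of_subset hunion (hFₙ n) hF (hcol n) (subset_iUnion_of_subset n subset_rfl)
      (prod_mono subset_rfl (subset_univ _)) fun h =>
        measure_prod_compl_iUnion_cyl_ne_zero hμ (hs_len n) n ((hfin _ (hFₙ n)).1 h)).nonempty
  choose k hkF hkcol using hmeet
  have hk : Injective k := fun a b hab => by_contra fun hne =>
    disjoint_left.1 (hpart_disj hne) (hkcol a) (hab ▸ hkcol b)
  refine ⟨fun n => s n (k n), infinite_symmDiff_iUnion hk hkF (fun n => hs_mem n _ (hkcol n)) ?_⟩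
  refine inter_finite_of_disjoint hunion hcompl hF
    (.iUnion fun n => (measurableSet_singleton n).prod (measurableSet_cyl _)) ?_
  exact disjoint_iUnion_prod_compl fun n => subset_iUnion (fun j => cyl (s n j)) (k n)

/-- No exact lifting of a Boolean algebra embedding of the measure algebra into
`𝒫(ℕ)/fin` is complete.  Here `μ` is the Borel measure on `C = ℕ × 2^ℕ` determined by
`μ({n} × [s]) = 2^{-|s|}`, and `Φ` is an exact lifting: it respects null symmetric
differences, preserves unions and complements modulo finite sets, sends a set to a
finite set iff it is null, the sets `Φ({n} × 2^ℕ)` partition `ℕ`, and each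
`Φ({n} × [s])` is the disjoint union of `Φ({n} × [s⌢0])` and `Φ({n} × [s⌢1])`.
Conclusion: there are finite binary sequences `tₙ` such that, with
`O = ⋃ₙ {n} × [tₙ]`, the symmetric difference of `Φ(O)` and `⋃ₙ Φ({n} × [tₙ])` is
infinite. -/
theorem exact_lifting_is_not_complete
    (μ : Measure SpaceC)
    (hμ : ∀ (n : ℕ) (s : List Bool),
      μ (({n} : Set ℕ) ×ˢ cyl s) = (2 : ENNReal)⁻¹ ^ s.length)
    (Φ : Set SpaceC → Set ℕ)
    (hnull : ∀ A B : Set SpaceC, MeasurableSet A → MeasurableSet B →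
      μ (symmDiff A B) = 0 → (symmDiff (Φ A) (Φ B)).Finite)
    (hunion : ∀ A B : Set SpaceC, MeasurableSet A → MeasurableSet B →
      (symmDiff (Φ (A ∪ B)) (Φ A ∪ Φ B)).Finite)
    (hcompl : ∀ A : Set SpaceC, MeasurableSet A →
      (symmDiff (Φ Aᶜ) ((Φ A)ᶜ)).Finite)
    (hfin : ∀ A : Set SpaceC, MeasurableSet A → ((Φ A).Finite ↔ μ A = 0))
    (hpart_disj : Pairwise fun n m : ℕ =>
      Disjoint (Φ (({n} : Set ℕ) ×ˢ (Set.univ : Set (ℕ → Bool))))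
               (Φ (({m} : Set ℕ) ×ˢ (Set.univ : Set (ℕ → Bool)))))
    (hpart_cover : (⋃ n : ℕ, Φ (({n} : Set ℕ) ×ˢ (Set.univ : Set (ℕ → Bool)))) = Set.univ)
    (hexact : ∀ (n : ℕ) (s : List Bool),
      Φ (({n} : Set ℕ) ×ˢ cyl s)
        = Φ (({n} : Set ℕ) ×ˢ cyl (s ++ [false])) ∪ Φ (({n} : Set ℕ) ×ˢ cyl (s ++ [true])) ∧
      Disjoint (Φ (({n} : Set ℕ) ×ˢ cyl (s ++ [false])))
               (Φ (({n} : Set ℕ) ×ˢ cyl (s ++ [true])))) :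
    ∃ t : ℕ → List Bool,
      (symmDiff (Φ (⋃ n : ℕ, ({n} : Set ℕ) ×ˢ cyl (t n)))
                (⋃ n : ℕ, Φ (({n} : Set ℕ) ×ˢ cyl (t n)))).Infinite :=
  exact_lifting_is_not_complete_general μ hμ Φ hunion hcompl hfin hpart_disj hexact
end
end
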